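/- arXiv:2405.03687 — 10 statements merged into one kernel-verified Lean document; each statement's English description precedes it below -/
import Mathlib

section
/- Let n ≥ 2 and let k be an integer with 1 ≤ k ≤ n−1. Let p, p' ∈ [0,1)^n be residue vectors each summing to k, and let T₁, T₂ ⊆ {1,…,n} be (possibly overlapping) sets of size k such that p'_i ≥ p_i for all i ∈ T₁ and p'_i ≤ p_i for all i ∈ T₂. Then at least one of the following holds: the probability that Sampford rounding selects T₁ under p' is at least its probability under p, or the probability that Sampford rounding selects T₂ under p' is at most its probability under p. That is, f_{p'}(T₁)/∑_{|A|=k} f_{p'}(A) ≥ f_p(T₁)/∑_{|A|=k} f_p(A), or f_{p'}(T₂)/∑_{|A|=k} f_{p'}(A) ≤ f_p(T₂)/∑_{|A|=k} f_p(A). -/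
/-!
Sampford's mass splits as `f_q(A) = ∑_{i∈A} ∏_u φ_q(A, i, u)` with one factor per coordinate `u`:
`q_u` or `1 - q_u` according as `u ∈ A`, times `1 - q_u` at the marked coordinate `u = i`.
Pairing the `(i, j)` terms of `f_p(T₁) f_{p'}(T₂)` and `f_{p'}(T₁) f_p(T₂)` and comparing them
factor by factor gives the cross inequality `f_p(T₁) f_{p'}(T₂) ≤ f_{p'}(T₁) f_p(T₂)`: on
`T₁ ∩ T₂` the residues agree, and on `T₁ \ T₂` or `T₂ \ T₁` the factor inequality reduces to
`p_u ≤ p'_u` or `p'_u ≤ p_u`. If both probabilities moved the wrong way, clearing the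
normalizers would reverse the cross inequality strictly; a zero normalizer makes the
corresponding probabilities `0` (as `x / 0 = 0`), which can only help.
-/

open Finset

/-- Sampford's (unnormalized) probability mass:
`f_p(A) = (∑_{i∈A}(1−p_i)) · ∏_{j∈A} p_j · ∏_{j∉A}(1−p_j)`. -/
noncomputable def sampf {n : ℕ} (p : Fin n → ℝ) (A : Finset (Fin n)) : ℝ :=
  (∑ i ∈ A, (1 - p i)) * (∏ j ∈ A, p j) * ∏ j ∈ Aᶜ, (1 - p j)

theorem div_le_div_or_div_le_div_of_mul_le_mul {K : Type*} [Field K] [LinearOrder K]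
    [IsStrictOrderedRing K] {a a' b b' Z Z' : K} (ha' : 0 ≤ a') (hb : 0 ≤ b) (hZ : 0 ≤ Z)
    (hZ' : 0 ≤ Z') (h : a * b' ≤ a' * b) : a / Z ≤ a' / Z' ∨ b' / Z' ≤ b / Z := by
  rw [or_iff_not_imp_left, not_le]
  intro hlt
  obtain rfl | hZ'pos := eq_or_lt_of_le hZ'
  · simpa using div_nonneg hb hZ
  obtain rfl | hZpos := eq_or_lt_of_le hZ
  · simp only [div_zero] at hlt
    exact absurd hlt (div_nonneg ha' hZ').not_gt
  have ha : 0 < a := (div_pos_iff_of_pos_right hZpos).mp (hlt.trans_le' (div_nonneg ha' hZ'))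
  rw [div_lt_div_iff₀ hZ'pos hZpos] at hlt
  rw [div_le_div_iff₀ hZ'pos hZpos]
  refine le_of_mul_le_mul_left ?_ ha
  calc a * (b' * Z) = a * b' * Z := by ring
    _ ≤ a' * b * Z := by gcongr
    _ = b * (a' * Z) := by ring
    _ ≤ b * (a * Z') := by gcongr
    _ = a * (b * Z') := by ring

section

variable {n : ℕ}

noncomputable def sampfFactor (q : Fin n → ℝ) (A : Finset (Fin n)) (i u : Fin n) : ℝ :=
  if u ∈ A then q u * (if u = i then 1 - q u else 1) else 1 - q u

theorem sampf_eq_sum_prod_sampfFactor (q : Fin n → ℝ) (A : Finset (Fin n)) :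
    sampf q A = ∑ i ∈ A, ∏ u, sampfFactor q A i u := by
  rw [sampf, mul_assoc, sum_mul]
  refine sum_congr rfl fun i hi => ?_
  have h_in : ∀ u ∈ A, sampfFactor q A i u = q u * if u = i then 1 - q u else 1 :=
    fun u hu => if_pos hu
  have h_out : ∀ u ∈ Aᶜ, sampfFactor q A i u = 1 - q u := fun u hu => if_neg (mem_compl.mp hu)
  rw [← prod_mul_prod_compl A, prod_congr rfl h_in, prod_congr rfl h_out, prod_mul_distrib,
    prod_ite_eq', if_pos hi]
  ring

theorem sampfFactor_nonneg {q : Fin n → ℝ} (hq : ∀ u, q u ∈ Set.Icc (0 : ℝ) 1)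
    (A : Finset (Fin n)) (i u : Fin n) : 0 ≤ sampfFactor q A i u := by
  obtain ⟨h0, h1⟩ := hq u
  unfold sampfFactor
  split_ifs <;> nlinarith

theorem sampfFactor_cross_le {p p' : Fin n → ℝ} (hp : ∀ u, p u ∈ Set.Icc (0 : ℝ) 1)
    (hp' : ∀ u, p' u ∈ Set.Icc (0 : ℝ) 1) {T₁ T₂ : Finset (Fin n)}
    (hup : ∀ u ∈ T₁, p u ≤ p' u) (hdown : ∀ u ∈ T₂, p' u ≤ p u) {i j : Fin n}
    (hi : i ∈ T₁) (hj : j ∈ T₂) (u : Fin n) :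
    sampfFactor p T₁ i u * sampfFactor p' T₂ j u ≤
      sampfFactor p' T₁ i u * sampfFactor p T₂ j u := by
  obtain ⟨h0, h1⟩ := hp u
  obtain ⟨h0', h1'⟩ := hp' u
  unfold sampfFactor
  by_cases h₁ : u ∈ T₁ <;> by_cases h₂ : u ∈ T₂
  · have heq := le_antisymm (hup u h₁) (hdown u h₂)
    simp only [h₁, h₂, heq, if_true, le_refl]
  · have hle := hup u h₁
    have hu : u ≠ j := by rintro rfl; exact h₂ hj
    simp only [h₁, h₂, hu, if_true, if_false]
    split_ifs <;> nlinarith [mul_nonneg (mul_nonneg (sub_nonneg.2 h1) (sub_nonneg.2 h1'))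
      (sub_nonneg.2 hle)]
  · have hle := hdown u h₂
    have hu : u ≠ i := by rintro rfl; exact h₁ hi
    simp only [h₁, h₂, hu, if_true, if_false]
    split_ifs <;> nlinarith [mul_nonneg (mul_nonneg (sub_nonneg.2 h1) (sub_nonneg.2 h1'))
      (sub_nonneg.2 hle)]
  · simp only [h₁, h₂, if_false]
    exact (mul_comm _ _).le

theorem sampf_cross_le {p p' : Fin n → ℝ} (hp : ∀ u, p u ∈ Set.Icc (0 : ℝ) 1)
    (hp' : ∀ u, p' u ∈ Set.Icc (0 : ℝ) 1) {T₁ T₂ : Finset (Fin n)}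
    (hup : ∀ u ∈ T₁, p u ≤ p' u) (hdown : ∀ u ∈ T₂, p' u ≤ p u) :
    sampf p T₁ * sampf p' T₂ ≤ sampf p' T₁ * sampf p T₂ := by
  simp only [sampf_eq_sum_prod_sampfFactor, sum_mul_sum, ← prod_mul_distrib]
  refine sum_le_sum fun i hi => sum_le_sum fun j hj => prod_le_prod (fun u _ => ?_) fun u _ => ?_
  · exact mul_nonneg (sampfFactor_nonneg hp T₁ i u) (sampfFactor_nonneg hp' T₂ j u)
  · exact sampfFactor_cross_le hp hp' hup hdown hi hj u

theorem sampf_nonneg {q : Fin n → ℝ} (hq : ∀ u, q u ∈ Set.Icc (0 : ℝ) 1) (A : Finset (Fin n)) :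
    0 ≤ sampf q A := by
  rw [sampf_eq_sum_prod_sampfFactor]
  exact sum_nonneg fun i _ => prod_nonneg fun u _ => sampfFactor_nonneg hq A i u

end

theorem sampford_pairwise_selection_monotone_general {n k : ℕ} (p p' : Fin n → ℝ)
    (hp : ∀ i, 0 ≤ p i ∧ p i < 1) (hp' : ∀ i, 0 ≤ p' i ∧ p' i < 1)
    (T₁ T₂ : Finset (Fin n))
    (hup : ∀ i ∈ T₁, p i ≤ p' i) (hdown : ∀ i ∈ T₂, p' i ≤ p i) :
    sampf p T₁ / ∑ A ∈ powersetCard k (univ : Finset (Fin n)), sampf p A ≤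
        sampf p' T₁ / ∑ A ∈ powersetCard k (univ : Finset (Fin n)), sampf p' A ∨
      sampf p' T₂ / ∑ A ∈ powersetCard k (univ : Finset (Fin n)), sampf p' A ≤
        sampf p T₂ / ∑ A ∈ powersetCard k (univ : Finset (Fin n)), sampf p A := by
  have hpI : ∀ i, p i ∈ Set.Icc (0 : ℝ) 1 := fun i => ⟨(hp i).1, (hp i).2.le⟩
  have hp'I : ∀ i, p' i ∈ Set.Icc (0 : ℝ) 1 := fun i => ⟨(hp' i).1, (hp' i).2.le⟩
  exact div_le_div_or_div_le_div_of_mul_le_mul (sampf_nonneg hp'I T₁) (sampf_nonneg hpI T₂)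
    (sum_nonneg fun A _ => sampf_nonneg hpI A) (sum_nonneg fun A _ => sampf_nonneg hp'I A)
    (sampf_cross_le hpI hp'I hup hdown)

/-- Sampford rounding satisfies pairwise selection monotonicity. -/
theorem sampford_pairwise_selection_monotone {n k : ℕ} (hn : 2 ≤ n) (hk1 : 1 ≤ k)
    (hkn : k ≤ n - 1) (p p' : Fin n → ℝ)
    (hp : ∀ i, 0 ≤ p i ∧ p i < 1) (hp' : ∀ i, 0 ≤ p' i ∧ p' i < 1)
    (hsum : ∑ i, p i = (k : ℝ)) (hsum' : ∑ i, p' i = (k : ℝ))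
    (T₁ T₂ : Finset (Fin n)) (hT₁ : T₁.card = k) (hT₂ : T₂.card = k)
    (hup : ∀ i ∈ T₁, p i ≤ p' i) (hdown : ∀ i ∈ T₂, p' i ≤ p i) :
    sampf p T₁ / ∑ A ∈ powersetCard k (univ : Finset (Fin n)), sampf p A ≤
        sampf p' T₁ / ∑ A ∈ powersetCard k (univ : Finset (Fin n)), sampf p' A ∨
      sampf p' T₂ / ∑ A ∈ powersetCard k (univ : Finset (Fin n)), sampf p' A ≤
        sampf p T₂ / ∑ A ∈ powersetCard k (univ : Finset (Fin n)), sampf p A :=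
  sampford_pairwise_selection_monotone_general p p' hp hp' T₁ T₂ hup hdown
end

section
/- Let p ∈ [0,1)^n sum to an integer k, and let ℓ be an integer with 0 ≤ ℓ ≤ n−1. Then ∑_{A⊆{1,…,n}, |A|=ℓ+1} f_p(A) − ∑_{A⊆{1,…,n}, |A|=ℓ} f_p(A) = (k − ℓ) · ∑_{A⊆{1,…,n}, |A|=ℓ} ∏_{j∈A} p_j ∏_{j∉A} (1−p_j). -/
open Finset

/-! Writing `w(A) = ∏_{j∈A} p_j ∏_{j∉A}(1−p_j)`, one has `(1−p_i) w(A) = p_i w(A∖{i})` for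
`i ∈ A`, so `f_p(A) = ∑_{i∈A} p_i w(A∖{i})`. Counting the pairs `(A, i)` with `i ∈ A` through
`B = A∖{i}` turns the sum over `|A| = ℓ+1` into `∑_{|B|=ℓ} (∑_{i∉B} p_i) w(B)
= ∑_{|B|=ℓ} (k − ∑_{i∈B} p_i) w(B)`, while directly `f_p(B) = (ℓ − ∑_{i∈B} p_i) w(B)`
for `|B| = ℓ`. -/

section DoubleCounting

variable {α β : Type*} [DecidableEq α] [AddCommMonoid β]

theorem sum_powersetCard_succ_sum_erase (s : Finset α) (ℓ : ℕ) (F : Finset α → α → β) :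
    ∑ A ∈ powersetCard (ℓ + 1) s, ∑ i ∈ A, F (A.erase i) i =
      ∑ B ∈ powersetCard ℓ s, ∑ i ∈ s \ B, F B i := by
  rw [sum_sigma', sum_sigma']
  refine sum_nbij' (fun x => ⟨x.1.erase x.2, x.2⟩) (fun x => ⟨insert x.2 x.1, x.2⟩)
    ?_ ?_ ?_ ?_ fun _ _ => rfl
  · rintro ⟨A, i⟩ h
    simp only [mem_sigma, mem_powersetCard, mem_sdiff] at h ⊢
    obtain ⟨⟨hAs, hcard⟩, hi⟩ := h
    exact ⟨⟨(erase_subset i A).trans hAs, by rw [card_erase_of_mem hi, hcard]; rfl⟩,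
      hAs hi, notMem_erase i A⟩
  · rintro ⟨B, i⟩ h
    simp only [mem_sigma, mem_powersetCard, mem_sdiff] at h ⊢
    obtain ⟨⟨hBs, hcard⟩, his, hiB⟩ := h
    exact ⟨⟨insert_subset his hBs, by rw [card_insert_of_notMem hiB, hcard]⟩,
      mem_insert_self i B⟩
  · rintro ⟨A, i⟩ h
    simp only [mem_sigma] at h
    simp [insert_erase h.2]
  · rintro ⟨B, i⟩ h
    simp only [mem_sigma, mem_sdiff] at h
    simp [erase_insert h.2.2]

end DoubleCounting

section BernoulliWeight

variable {α R : Type*} [Fintype α] [DecidableEq α] [CommRing R]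

def bernoulliWeight (p : α → R) (A : Finset α) : R :=
  (∏ j ∈ A, p j) * ∏ j ∈ Aᶜ, (1 - p j)

theorem one_sub_mul_bernoulliWeight_of_mem (p : α → R) {A : Finset α} {i : α} (hi : i ∈ A) :
    (1 - p i) * bernoulliWeight p A = p i * bernoulliWeight p (A.erase i) := by
  rw [bernoulliWeight, bernoulliWeight, ← mul_prod_erase A p hi, compl_erase,
    prod_insert (notMem_compl.mpr hi)]
  ring

end BernoulliWeight

theorem sampf_eq_sum_erase {n : ℕ} (p : Fin n → ℝ) (A : Finset (Fin n)) :
    sampf p A = ∑ i ∈ A, p i * bernoulliWeight p (A.erase i) := by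
  rw [sampf, mul_assoc, sum_mul]
  exact sum_congr rfl fun i hi => one_sub_mul_bernoulliWeight_of_mem p hi

theorem sampf_eq_card_sub_sum_mul {n : ℕ} (p : Fin n → ℝ) (A : Finset (Fin n)) :
    sampf p A = (#A - ∑ i ∈ A, p i) * bernoulliWeight p A := by
  rw [sampf, mul_assoc, bernoulliWeight, sum_sub_distrib, sum_const, nsmul_one]

theorem sum_powersetCard_succ_sampf {n k : ℕ} (p : Fin n → ℝ) (hsum : ∑ i, p i = (k : ℝ))
    (ℓ : ℕ) :
    ∑ A ∈ powersetCard (ℓ + 1) univ, sampf p A =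
      ∑ B ∈ powersetCard ℓ univ, ((k : ℝ) - ∑ i ∈ B, p i) * bernoulliWeight p B := by
  simp_rw [sampf_eq_sum_erase]
  rw [sum_powersetCard_succ_sum_erase univ ℓ fun B i => p i * bernoulliWeight p B]
  refine sum_congr rfl fun B _ => ?_
  rw [← sum_mul, ← compl_eq_univ_sdiff, ← hsum, ← sum_add_sum_compl B p, add_sub_cancel_left]

theorem sampford_magic_sub_general {n k ℓ : ℕ} (p : Fin n → ℝ) (hsum : ∑ i, p i = (k : ℝ)) :
    (∑ A ∈ powersetCard (ℓ + 1) (univ : Finset (Fin n)), sampf p A) -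
        ∑ A ∈ powersetCard ℓ (univ : Finset (Fin n)), sampf p A =
      ((k : ℝ) - ℓ) *
        ∑ A ∈ powersetCard ℓ (univ : Finset (Fin n)),
          (∏ j ∈ A, p j) * ∏ j ∈ Aᶜ, (1 - p j) := by
  rw [sum_powersetCard_succ_sampf p hsum, mul_sum, ← sum_sub_distrib]
  refine sum_congr rfl fun B hB => ?_
  rw [sampf_eq_card_sub_sum_mul, (mem_powersetCard.mp hB).2, bernoulliWeight]
  ring

/-- Lemma 3.6 (auxiliary lemma): for `0 ≤ ℓ ≤ n−1`,
`∑_{|A|=ℓ+1} f(A) − ∑_{|A|=ℓ} f(A) = (k−ℓ) ∑_{|A|=ℓ} ∏_{j∈A} p_j ∏_{j∉A}(1−p_j)`. -/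
theorem sampford_magic_sub {n k ℓ : ℕ} (p : Fin n → ℝ)
    (hp : ∀ i, 0 ≤ p i ∧ p i < 1) (hsum : ∑ i, p i = (k : ℝ)) (hl : ℓ ≤ n - 1) :
    (∑ A ∈ powersetCard (ℓ + 1) (univ : Finset (Fin n)), sampf p A) -
        ∑ A ∈ powersetCard ℓ (univ : Finset (Fin n)), sampf p A =
      ((k : ℝ) - ℓ) *
        ∑ A ∈ powersetCard ℓ (univ : Finset (Fin n)),
          (∏ j ∈ A, p j) * ∏ j ∈ Aᶜ, (1 - p j) :=
  sampford_magic_sub_general p hsum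
end

section
/- Let p ∈ [0,1)^n sum to an integer k with 1 ≤ k ≤ n−1, and let s := ∑_{i=1}^{k} (1 − p_i). Then ∑_{A⊆{1,…,n}} | |A| − k | · ∏_{i∈A} p_i ∏_{i∉A} (1−p_i) ≤ 2s. (In probabilistic terms: E[ | |B| − k | ] ≤ 2s for the Poisson trial B with success probabilities p.) -/
/-!
Writing `|x| = x + 2 x⁻`, the mean of `|#B - k|` is twice the mean of `(#B - k)⁻`, because
`E[#B] = ∑ pᵢ = k`. If `S` is any set of `k` indices, then `(#B - k)⁻ ≤ #(S \ B)`, and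
`E[#(S \ B)] = ∑_{i ∈ S} (1 - pᵢ)`.
-/

open Finset

section PoissonTrial

variable {ι R : Type*} [Fintype ι] [DecidableEq ι] [CommRing R]

def poissonWeight (p : ι → R) (A : Finset ι) : R :=
  (∏ i ∈ A, p i) * ∏ i ∈ Aᶜ, (1 - p i)

theorem sum_poissonWeight (p : ι → R) : ∑ A, poissonWeight p A = 1 := by
  simp [poissonWeight, ← Fintype.prod_add]

theorem sum_poissonWeight_of_mem (p : ι → R) (i : ι) :
    ∑ A, (if i ∈ A then poissonWeight p A else 0) = p i := by
  -- Forcing `1 - p i` to `0` kills exactly the terms with `i ∉ A`.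
  have hterm : ∀ A : Finset ι, (if i ∈ A then poissonWeight p A else 0) =
      (∏ j ∈ A, p j) * ∏ j ∈ Aᶜ, Function.update (fun j => 1 - p j) i 0 j := by
    intro A
    by_cases hi : i ∈ A
    · rw [if_pos hi, prod_update_of_notMem (notMem_compl.mpr hi)]
      rfl
    · rw [if_neg hi, prod_update_of_mem (mem_compl.mpr hi), zero_mul, mul_zero]
  rw [sum_congr rfl fun A _ => hterm A, ← Fintype.prod_add,
    ← mul_prod_erase univ _ (mem_univ i)]
  rw [Function.update_self, add_zero, prod_eq_one fun j hj => ?_, mul_one]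
  rw [Function.update_of_ne (ne_of_mem_erase hj), add_sub_cancel]

theorem sum_card_inter_mul_poissonWeight (p : ι → R) (T : Finset ι) :
    ∑ A, (#(A ∩ T) : R) * poissonWeight p A = ∑ i ∈ T, p i := by
  have hcard : ∀ A : Finset ι, (#(A ∩ T) : R) = ∑ i ∈ T, if i ∈ A then 1 else 0 := by
    intro A
    rw [sum_boole, filter_mem_eq_inter, inter_comm]
  simp_rw [hcard, sum_mul, ite_mul, one_mul, zero_mul]
  rw [sum_comm]
  exact sum_congr rfl fun i _ => sum_poissonWeight_of_mem p i

theorem sum_card_mul_poissonWeight (p : ι → R) :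
    ∑ A, (#A : R) * poissonWeight p A = ∑ i, p i := by
  simpa using sum_card_inter_mul_poissonWeight p univ

theorem sum_card_sdiff_mul_poissonWeight (p : ι → R) (T : Finset ι) :
    ∑ A, (#(T \ A) : R) * poissonWeight p A = ∑ i ∈ T, (1 - p i) := by
  have hcard : ∀ A : Finset ι, (#(T \ A) : R) = #T - #(A ∩ T) := by
    intro A
    rw [eq_sub_iff_add_eq, inter_comm, ← Nat.cast_add, card_sdiff_add_card_inter]
  simp_rw [hcard, sub_mul, sum_sub_distrib]
  rw [← mul_sum, sum_poissonWeight, sum_card_inter_mul_poissonWeight, sum_const, nsmul_one,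
    mul_one]

end PoissonTrial

theorem poissonWeight_nonneg {ι : Type*} [Fintype ι] [DecidableEq ι] {p : ι → ℝ}
    (hp : ∀ i, 0 ≤ p i ∧ p i ≤ 1) (A : Finset ι) : 0 ≤ poissonWeight p A :=
  mul_nonneg (prod_nonneg fun i _ => (hp i).1) (prod_nonneg fun i _ => sub_nonneg.mpr (hp i).2)

theorem sum_abs_sub_mul_eq_two_mul_sum_negPart {α : Type*} (s : Finset α) (X w : α → ℝ)
    (c : ℝ) (hmean : ∑ a ∈ s, X a * w a = c * ∑ a ∈ s, w a) :
    ∑ a ∈ s, |X a - c| * w a = 2 * ∑ a ∈ s, (X a - c)⁻ * w a := by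
  have habs : ∀ x : ℝ, |x| = x + 2 * x⁻ := fun x => by
    linarith [abs_sub_eq_two_nsmul_negPart x, two_nsmul x⁻]
  simp_rw [habs, add_mul, sum_add_distrib, sub_mul, sum_sub_distrib, hmean, ← mul_sum,
    mul_assoc, ← mul_sum]
  ring

theorem negPart_card_sub_card_le_card_sdiff {α : Type*} [DecidableEq α] (A S : Finset α) :
    ((#A : ℝ) - #S)⁻ ≤ #(S \ A) := by
  rw [negPart_def, neg_sub]
  refine max_le ?_ (Nat.cast_nonneg _)
  rw [sub_le_iff_le_add, ← Nat.cast_add, Nat.cast_le]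
  exact card_le_card_sdiff_add_card

theorem poisson_trial_abs_bound_general {n k : ℕ} (hkn : k ≤ n - 1)
    (p : Fin n → ℝ) (hp : ∀ i, 0 ≤ p i ∧ p i < 1) (hsum : ∑ i, p i = (k : ℝ)) :
    ∑ A : Finset (Fin n),
        |(A.card : ℝ) - k| * ((∏ i ∈ A, p i) * ∏ i ∈ Aᶜ, (1 - p i)) ≤
      2 * ∑ i ∈ univ.filter (fun i : Fin n => i.val < k), (1 - p i) := by
  set S := univ.filter (fun i : Fin n => i.val < k)
  have hS : #S = k := by rw [Fin.card_filter_val_lt]; omega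
  have hw := poissonWeight_nonneg fun i => ⟨(hp i).1, (hp i).2.le⟩
  have hmean : ∑ A, (#A : ℝ) * poissonWeight p A = k * ∑ A, poissonWeight p A := by
    rw [sum_card_mul_poissonWeight, sum_poissonWeight, hsum, mul_one]
  calc ∑ A, |(#A : ℝ) - k| * poissonWeight p A
      = 2 * ∑ A, ((#A : ℝ) - k)⁻ * poissonWeight p A :=
        sum_abs_sub_mul_eq_two_mul_sum_negPart _ _ _ _ hmean
    _ ≤ 2 * ∑ A, (#(S \ A) : ℝ) * poissonWeight p A := by
        gcongr with A
        · exact hw A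
        · simpa [hS] using negPart_card_sub_card_le_card_sdiff A S
    _ = 2 * ∑ i ∈ S, (1 - p i) := by rw [sum_card_sdiff_mul_poissonWeight]

/-- `E[||B| − k|] ≤ 2s` for the Poisson trial `B` with success probabilities `p`,
where `s := ∑_{i=1}^{k} (1 − p_i)`. -/
theorem poisson_trial_abs_bound {n k : ℕ} (hk1 : 1 ≤ k) (hkn : k ≤ n - 1)
    (p : Fin n → ℝ) (hp : ∀ i, 0 ≤ p i ∧ p i < 1) (hsum : ∑ i, p i = (k : ℝ)) :
    ∑ A : Finset (Fin n),
        |(A.card : ℝ) - k| * ((∏ i ∈ A, p i) * ∏ i ∈ Aᶜ, (1 - p i)) ≤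
      2 * ∑ i ∈ univ.filter (fun i : Fin n => i.val < k), (1 - p i) :=
  poisson_trial_abs_bound_general hkn p hp hsum
end

section
/- Let n ≥ 2 and let p ∈ [0,1)^n sum to an integer k with 1 ≤ k ≤ n−1. For real t near 0, let p(t) ∈ ℝ^n be obtained from p by replacing p_1 with p_1 + t and p_n with p_n − t. Then the function t ↦ ∑_{A⊆{1,…,n}, |A|<k} (k − |A|) · ∏_{i∈A} p(t)_i ∏_{i∉A} (1−p(t)_i) is differentiable at t = 0 with derivative equal to (p_n − p_1) · ∑_{A⊆{2,…,n−1}, |A|=k−1} ∏_{i∈A} p_i ∏_{i∈{2,…,n−1}∖A} (1−p_i). (In probabilistic terms: (∂/∂p_1 − ∂/∂p_n) E[1{|B| < k}·(k − |B|)] = (p_n − p_1)·P[|B̂| = k−1], where B̂ is the Poisson trial on {2,…,n−1}.) -/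
/-!
Conditioning the Poisson trial on the two perturbed coordinates writes the expectation as
`∑_{M ⊆ {2,…,n-1}} P[B̂ = M] · Φ_M(t)`, where `Φ_M` is a quadratic polynomial in `t`.
With `g m = (k - m)⁺` (truncated subtraction on `ℕ`) and `m = |M|`, its derivative at `0` is
`(p_n - p_1)` times the second difference `g m - 2 g (m+1) + g (m+2)`, which is the indicator
of `m = k - 1`: `g` is piecewise linear with its only kink at `k`.
-/

open Finset

/-- The perturbation `p(t)`: add `t` to the first coordinate and subtract `t`
from the last coordinate. -/
noncomputable def perturb {n : ℕ} (p : Fin n → ℝ) (t : ℝ) : Fin n → ℝ :=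
  fun i => if i.val = 0 then p i + t else if i.val = n - 1 then p i - t else p i

section PoissonTrial

variable {ι R : Type*} [DecidableEq ι] [CommRing R]

/-- `P[B = A]` for the Poisson trial `B` on `s` with success probabilities `q`. -/
def trialWeight (s : Finset ι) (q : ι → R) (A : Finset ι) : R :=
  (∏ i ∈ A, q i) * ∏ i ∈ s \ A, (1 - q i)

theorem trialWeight_congr {s A : Finset ι} {q q' : ι → R} (h : ∀ i ∈ s, q i = q' i)
    (hA : A ⊆ s) : trialWeight s q A = trialWeight s q' A := by
  unfold trialWeight
  rw [prod_congr rfl fun i hi => h i (hA hi),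
    prod_congr rfl fun i hi => congrArg (1 - ·) (h i (mem_sdiff.1 hi).1)]

theorem sum_powerset_insert_mul_trialWeight {s : Finset ι} {a : ι} (ha : a ∉ s) (q : ι → R)
    (F : Finset ι → R) :
    ∑ A ∈ (insert a s).powerset, F A * trialWeight (insert a s) q A =
      ∑ A ∈ s.powerset, ((1 - q a) * F A + q a * F (insert a A)) * trialWeight s q A := by
  rw [sum_powerset_insert ha, ← sum_add_distrib]
  refine sum_congr rfl fun A hA => ?_
  have haA : a ∉ A := fun h => ha (mem_powerset.1 hA h)
  simp only [trialWeight, insert_sdiff_of_notMem _ haA, insert_sdiff_insert,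
    sdiff_insert_of_notMem ha, prod_insert haA, prod_insert (notMem_sdiff_of_notMem_left ha)]
  ring

theorem sum_powerset_insert_insert_card_mul_trialWeight {s : Finset ι} {a b : ι}
    (ha : a ∉ insert b s) (hb : b ∉ s) (q : ι → R) (F : ℕ → R) :
    ∑ A ∈ (insert a (insert b s)).powerset, F #A * trialWeight (insert a (insert b s)) q A =
      ∑ M ∈ s.powerset,
        ((1 - q b) * ((1 - q a) * F #M + q a * F (#M + 1)) +
          q b * ((1 - q a) * F (#M + 1) + q a * F (#M + 2))) * trialWeight s q M := by
  rw [sum_powerset_insert_mul_trialWeight ha, sum_powerset_insert_mul_trialWeight hb]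
  refine sum_congr rfl fun M hM => ?_
  have hbM : b ∉ M := fun h => hb (mem_powerset.1 hM h)
  have haM : a ∉ M := fun h => ha (mem_insert_of_mem (mem_powerset.1 hM h))
  have haBM : a ∉ insert b M := fun h => ha (insert_subset_insert b (mem_powerset.1 hM) h)
  rw [card_insert_of_notMem haM, card_insert_of_notMem hbM, card_insert_of_notMem haBM,
    card_insert_of_notMem hbM]

end PoissonTrial

theorem hasDerivAt_bilinear_along_antidiagonal (x y a b c : ℝ) :
    HasDerivAt
      (fun t => (1 - (y - t)) * ((1 - (x + t)) * a + (x + t) * b) +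
        (y - t) * ((1 - (x + t)) * b + (x + t) * c))
      ((y - x) * (a - 2 * b + c)) 0 := by
  have hx : HasDerivAt (fun t => x + t) 1 0 := (hasDerivAt_id 0).const_add x
  have hy : HasDerivAt (fun t => y - t) (-1) 0 := (hasDerivAt_id 0).const_sub y
  have hx' := hx.const_sub 1
  have hy' := hy.const_sub 1
  refine ((hy'.fun_mul ((hx'.mul_const a).fun_add (hx.mul_const b))).fun_add
    (hy.fun_mul ((hx'.mul_const b).fun_add (hx.mul_const c)))).congr_deriv ?_
  ring

theorem natCast_tsub_second_diff (k m : ℕ) :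
    ((k - m : ℕ) : ℝ) - 2 * ((k - (m + 1) : ℕ) : ℝ) + ((k - (m + 2) : ℕ) : ℝ) =
      if m + 1 = k then 1 else 0 := by
  have h : ((k - m : ℕ) : ℤ) - 2 * ((k - (m + 1) : ℕ) : ℤ) + ((k - (m + 2) : ℕ) : ℤ) =
      if m + 1 = k then 1 else 0 := by
    split_ifs <;> omega
  exact_mod_cast h

theorem sum_filter_card_lt_sub_mul {α : Type*} [Fintype α] (k : ℕ) (X : Finset α → ℝ) :
    ∑ A ∈ (univ : Finset (Finset α)).filter (fun A => #A < k), ((k : ℝ) - #A) * X A =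
      ∑ A : Finset α, ((k - #A : ℕ) : ℝ) * X A := by
  rw [sum_filter]
  refine sum_congr rfl fun A _ => ?_
  split_ifs with h
  · rw [Nat.cast_sub h.le]
  · rw [Nat.sub_eq_zero_of_le (not_lt.1 h), Nat.cast_zero, zero_mul]

theorem hasDerivAt_sum_natCast_tsub_card_mul_trialWeight {ι : Type*} [DecidableEq ι]
    {S : Finset ι} {a b : ι} (ha : a ∉ insert b S) (hb : b ∉ S) {k : ℕ} (hk : 1 ≤ k)
    (p : ι → ℝ) (q : ℝ → ι → ℝ) (hqa : ∀ t, q t a = p a + t)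
    (hqb : ∀ t, q t b = p b - t) (hqS : ∀ t, ∀ i ∈ S, q t i = p i) :
    HasDerivAt
      (fun t => ∑ A ∈ (insert a (insert b S)).powerset,
        ((k - #A : ℕ) : ℝ) * trialWeight (insert a (insert b S)) (q t) A)
      ((p b - p a) * ∑ M ∈ powersetCard (k - 1) S, trialWeight S p M) 0 := by
  set g : ℕ → ℝ := fun m => ((k - m : ℕ) : ℝ)
  have hconditioned : (fun t => ∑ A ∈ (insert a (insert b S)).powerset,
        g #A * trialWeight (insert a (insert b S)) (q t) A) =
      fun t => ∑ M ∈ S.powerset, trialWeight S p M *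
        ((1 - (p b - t)) * ((1 - (p a + t)) * g #M + (p a + t) * g (#M + 1)) +
          (p b - t) * ((1 - (p a + t)) * g (#M + 1) + (p a + t) * g (#M + 2))) := by
    funext t
    rw [sum_powerset_insert_insert_card_mul_trialWeight ha hb]
    refine sum_congr rfl fun M hM => ?_
    rw [hqa, hqb, trialWeight_congr (hqS t) (mem_powerset.1 hM), mul_comm]
  rw [hconditioned]
  refine (HasDerivAt.fun_sum fun M _ =>
    (hasDerivAt_bilinear_along_antidiagonal (p a) (p b) _ _ _).const_mul
      (trialWeight S p M)).congr_deriv ?_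
  simp only [g, natCast_tsub_second_diff, powersetCard_eq_filter, sum_filter, mul_sum]
  refine sum_congr rfl fun M _ => ?_
  have hcard : #M + 1 = k ↔ #M = k - 1 := by omega
  simp only [hcard]
  split_ifs <;> ring

theorem perturb_apply_of_val_eq_zero {n : ℕ} (p : Fin n → ℝ) (t : ℝ) {i : Fin n}
    (h : i.val = 0) : perturb p t i = p i + t := by
  simp only [perturb, if_pos h]

theorem perturb_apply_of_val_eq_sub_one {n : ℕ} (p : Fin n → ℝ) (t : ℝ) {i : Fin n}
    (h0 : i.val ≠ 0) (h : i.val = n - 1) : perturb p t i = p i - t := by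
  simp only [perturb, if_neg h0, if_pos h]

theorem perturb_apply_of_pos_of_lt {n : ℕ} (p : Fin n → ℝ) (t : ℝ) {i : Fin n}
    (h0 : 0 < i.val) (h : i.val < n - 1) : perturb p t i = p i := by
  simp only [perturb, if_neg h0.ne', if_neg h.ne]

/-- `(∂/∂p_1 − ∂/∂p_n) E[1{|B| < k}·(k − |B|)] = (p_n − p_1)·P[|B̂| = k−1]`,
where `B̂` is the Poisson trial on `{2,…,n−1}`. -/
theorem poisson_trial_derivative {n k : ℕ} (hn : 2 ≤ n) (hk1 : 1 ≤ k)
    (p : Fin n → ℝ) :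
    HasDerivAt
      (fun t : ℝ =>
        ∑ A ∈ (univ : Finset (Finset (Fin n))).filter (fun A => A.card < k),
          ((k : ℝ) - A.card) *
            ((∏ i ∈ A, perturb p t i) * ∏ i ∈ Aᶜ, (1 - perturb p t i)))
      ((p ⟨n - 1, by omega⟩ - p ⟨0, by omega⟩) *
        ∑ A ∈ powersetCard (k - 1)
            (univ.filter fun i : Fin n => 0 < i.val ∧ i.val < n - 1),
          (∏ i ∈ A, p i) *
            ∏ i ∈ (univ.filter fun i : Fin n => 0 < i.val ∧ i.val < n - 1) \ A, (1 - p i))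
      0 := by
  set S := univ.filter fun i : Fin n => 0 < i.val ∧ i.val < n - 1
  have hb : (⟨n - 1, by omega⟩ : Fin n) ∉ S := by simp [S]
  have ha : (⟨0, by omega⟩ : Fin n) ∉ insert ⟨n - 1, by omega⟩ S := by
    simp only [mem_insert, Fin.mk.injEq, mem_filter, S, lt_irrefl, false_and, and_false, or_false]
    omega
  have huniv : insert ⟨0, by omega⟩ (insert ⟨n - 1, by omega⟩ S) = univ := by
    ext i
    simp only [mem_insert, mem_filter, mem_univ, true_and, iff_true, S, Fin.ext_iff]
    omega
  have hderiv := hasDerivAt_sum_natCast_tsub_card_mul_trialWeight ha hb hk1 p (perturb p)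
    (fun t => perturb_apply_of_val_eq_zero p t rfl)
    (fun t => perturb_apply_of_val_eq_sub_one p t (show n - 1 ≠ 0 by omega) rfl)
    (fun t i hi => perturb_apply_of_pos_of_lt p t (mem_filter.1 hi).2.1 (mem_filter.1 hi).2.2)
  rw [huniv, powerset_univ] at hderiv
  simpa only [sum_filter_card_lt_sub_mul, compl_eq_univ_sdiff, trialWeight] using hderiv
end

section
/- Let r be a rounding rule for n parties that satisfies selection monotonicity. Then r is Lipschitz continuous with constant 1 in the ℓ₁ norm: for any integer k, any two residue vectors p, p' ∈ [0,1)^n each summing to k, and any k-element subset T of {1,…,n}, it holds that |P[r(p') = T] − P[r(p) = T]| ≤ ‖p − p'‖₁. -/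
open Finset

/-- A rounding rule for `n` parties: for every residue vector `p ∈ [0,1)^n`
summing to an integer `k`, `r p` is a probability distribution over subsets of
`{1,…,n}` supported on `k`-element subsets whose marginals are the `p i`. -/
def IsRoundingRule (n : ℕ) (r : (Fin n → ℝ) → Finset (Fin n) → ℝ) : Prop :=
  ∀ (p : Fin n → ℝ) (k : ℕ), (∀ i, 0 ≤ p i ∧ p i < 1) → (∑ i, p i = (k : ℝ)) →
    (∀ A : Finset (Fin n), 0 ≤ r p A) ∧
    (∑ A : Finset (Fin n), r p A = 1) ∧
    (∀ A : Finset (Fin n), r p A ≠ 0 → A.card = k) ∧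
    (∀ i : Fin n,
      ∑ A ∈ (univ : Finset (Finset (Fin n))).filter (fun A => i ∈ A), r p A = p i)

/-- Selection monotonicity of a rounding rule. -/
def SelectionMonotone (n : ℕ) (r : (Fin n → ℝ) → Finset (Fin n) → ℝ) : Prop :=
  ∀ (k : ℕ) (p p' : Fin n → ℝ),
    (∀ i, 0 ≤ p i ∧ p i < 1) → (∀ i, 0 ≤ p' i ∧ p' i < 1) →
    (∑ i, p i = (k : ℝ)) → (∑ i, p' i = (k : ℝ)) →
    ∀ T : Finset (Fin n), T.card = k →
      (∀ i ∈ T, p i ≤ p' i) → (∀ i ∉ T, p' i ≤ p i) →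
      r p T ≤ r p' T

/-!
Decompose `p' - p` into transfers of mass from one coordinate to another whose amounts add up
to `‖p - p'‖₁ / 2`; it then suffices that a transfer of amount `m` moves `r · T` by at most `2m`.
For a transfer from `b ∉ T` to `a ∈ T`, selection monotonicity makes every set containing `a`
but not `b` gain probability and every set containing `b` but not `a` lose it; since the gains
minus the losses equal the marginal changes `m - (-m) = 2m`, the gain at `T` lies in `[0, 2m]`.
A transfer between two coordinates on the same side of `T` is routed through a coordinate on
the other side, in two legs whose effects on `T` have opposite signs.
-/

section

variable {n k : ℕ}

def transfer (q : Fin n → ℝ) (a b : Fin n) (m : ℝ) : Fin n → ℝ :=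
  q + m • (Pi.single a 1 - Pi.single b 1)

lemma transfer_apply (q : Fin n → ℝ) (a b : Fin n) (m : ℝ) (x : Fin n) :
    transfer q a b m x = q x + m * ((if x = a then 1 else 0) - if x = b then 1 else 0) := by
  simp [transfer, Pi.single_apply]

lemma transfer_apply_left (q : Fin n → ℝ) {a b : Fin n} (m : ℝ) (hab : a ≠ b) :
    transfer q a b m a = q a + m := by
  simp [transfer_apply, hab]

lemma transfer_apply_right (q : Fin n → ℝ) {a b : Fin n} (m : ℝ) (hab : a ≠ b) :
    transfer q a b m b = q b - m := by
  simp [transfer_apply, hab.symm, sub_eq_add_neg]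

lemma transfer_apply_of_ne (q : Fin n → ℝ) {a b x : Fin n} (m : ℝ) (ha : x ≠ a)
    (hb : x ≠ b) :
    transfer q a b m x = q x := by
  simp [transfer_apply, ha, hb]

@[simp] lemma transfer_self (q : Fin n → ℝ) (a : Fin n) (m : ℝ) : transfer q a a m = q := by
  simp [transfer]

@[simp] lemma transfer_zero (q : Fin n → ℝ) (a b : Fin n) : transfer q a b 0 = q := by
  simp [transfer]

lemma transfer_add (q : Fin n → ℝ) (a b : Fin n) (m m' : ℝ) :
    transfer (transfer q a b m) a b m' = transfer q a b (m + m') := by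
  simp only [transfer]; module

lemma transfer_transfer_swap (q : Fin n → ℝ) (a b : Fin n) (m : ℝ) :
    transfer (transfer q a b m) b a m = q := by
  simp only [transfer]; module

lemma transfer_comm (q : Fin n → ℝ) (a b c d : Fin n) (m m' : ℝ) :
    transfer (transfer q a b m) c d m' = transfer (transfer q c d m') a b m := by
  simp only [transfer]; module

lemma transfer_trans (q : Fin n → ℝ) (a b c : Fin n) (m : ℝ) :
    transfer (transfer q a b m) b c m = transfer q a c m := by
  simp only [transfer]; module

lemma sum_transfer (q : Fin n → ℝ) (a b : Fin n) (m : ℝ) :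
    ∑ x, transfer q a b m x = ∑ x, q x := by
  simp [transfer, sum_add_distrib, ← mul_sum]

lemma le_transfer_of_ne_right (q : Fin n → ℝ) {a b x : Fin n} {m : ℝ} (hm : 0 ≤ m)
    (hx : x ≠ b) :
    q x ≤ transfer q a b m x := by
  rw [transfer_apply]; split_ifs <;> simp_all

lemma transfer_le_of_ne_left (q : Fin n → ℝ) {a b x : Fin n} {m : ℝ} (hm : 0 ≤ m)
    (hx : x ≠ a) :
    transfer q a b m x ≤ q x := by
  rw [transfer_apply]; split_ifs <;> simp_all

def IsResidueVector (k : ℕ) (q : Fin n → ℝ) : Prop :=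
  (∀ i, 0 ≤ q i ∧ q i < 1) ∧ ∑ i, q i = k

namespace IsResidueVector

variable {q : Fin n → ℝ}

lemma transfer (hq : IsResidueVector k q) {a b : Fin n} {m : ℝ} (hm : 0 ≤ m)
    (ha : q a + m < 1) (hb : m ≤ q b) : IsResidueVector k (transfer q a b m) := by
  refine ⟨fun x => ?_, (sum_transfer q a b m).trans hq.2⟩
  have := hq.1 x
  rw [transfer_apply]
  split_ifs with hxa hxb hxb <;> subst_vars <;> constructor <;> linarith

lemma lt_of_nonempty (hq : IsResidueVector k q) [Nonempty (Fin n)] : k < n := by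
  have : ∑ i, q i < ∑ _i : Fin n, (1 : ℝ) :=
    sum_lt_sum_of_nonempty univ_nonempty fun i _ => (hq.1 i).2
  rw [hq.2] at this
  exact_mod_cast (by simpa using this : (k : ℝ) < n)

lemma apply_eq_zero (hq : IsResidueVector 0 q) (i : Fin n) : q i = 0 := by
  have := (sum_eq_zero_iff_of_nonneg fun i _ => (hq.1 i).1).1 (by simpa using hq.2)
  exact this i (mem_univ i)

lemma exists_mem_iff_notMem (hq : IsResidueVector k q) {T : Finset (Fin n)} (hT : T.card = k)
    {b : Fin n} (hb : q b ≠ 0) (a : Fin n) : ∃ l, l ∈ T ↔ a ∉ T := by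
  by_cases haT : a ∈ T
  · have : Nonempty (Fin n) := ⟨a⟩
    have : T.card < (univ : Finset (Fin n)).card := by
      rw [card_univ, Fintype.card_fin, hT]; exact hq.lt_of_nonempty
    obtain ⟨l, -, hl⟩ := exists_mem_notMem_of_card_lt_card this
    exact ⟨l, by simp [haT, hl]⟩
  · obtain ⟨l, hl⟩ : T.Nonempty := by
      rw [← card_pos, hT, Nat.pos_iff_ne_zero]
      rintro rfl
      exact hb (hq.apply_eq_zero b)
    exact ⟨l, by simp [haT, hl]⟩

end IsResidueVector

namespace IsRoundingRule

variable {r : (Fin n → ℝ) → Finset (Fin n) → ℝ} {q : Fin n → ℝ}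

lemma apply_eq_zero_of_card_ne (hr : IsRoundingRule n r) (hq : IsResidueVector k q)
    {A : Finset (Fin n)} (hA : A.card ≠ k) : r q A = 0 :=
  not_imp_comm.1 ((hr q k hq.1 hq.2).2.2.1 A) hA

lemma sum_filter_mem (hr : IsRoundingRule n r) (hq : IsResidueVector k q) (i : Fin n) :
    ∑ A with i ∈ A, r q A = q i :=
  (hr q k hq.1 hq.2).2.2.2 i

end IsRoundingRule

lemma exists_lt_of_sum_eq_of_ne {p p' : Fin n → ℝ} (hsum : ∑ i, p i = ∑ i, p' i)
    (hne : p ≠ p') :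
    ∃ i, p i < p' i := by
  by_contra! h
  exact hne (funext fun i =>
    ((sum_eq_sum_iff_of_le fun i _ => h i).1 hsum.symm i (mem_univ i)).symm)

lemma sum_abs_sub_transfer {p p' : Fin n → ℝ} {a b : Fin n} {m : ℝ} (hab : a ≠ b)
    (hm : 0 ≤ m) (ha : m ≤ p' a - p a) (hb : m ≤ p b - p' b) :
    ∑ x, |transfer p a b m x - p' x| = ∑ x, |p x - p' x| - 2 * m := by
  have h (x : Fin n) : |p x - p' x|
      = |transfer p a b m x - p' x| + m * ((if x = a then 1 else 0) + if x = b then 1 else 0) := by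
    by_cases hxa : x = a
    · subst hxa
      rw [transfer_apply_left p m hab, abs_of_nonpos (by linarith), abs_of_nonpos (by linarith)]
      simp [hab]; ring
    by_cases hxb : x = b
    · subst hxb
      rw [transfer_apply_right p m hab, abs_of_nonneg (by linarith), abs_of_nonneg (by linarith)]
      simp [hxa]; ring
    · simp [transfer_apply_of_ne p m hxa hxb, hxa, hxb]
  simp only [h, sum_add_distrib, ← mul_sum, sum_ite_eq', mem_univ, if_true]
  ring

lemma filter_transfer_ne_ssubset {p p' : Fin n → ℝ} {i j : Fin n} (hi : p i < p' i)
    (hj : p' j < p j) :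
    ({x | transfer p i j (min (p' i - p i) (p j - p' j)) x ≠ p' x} : Finset (Fin n))
      ⊂ ({x | p x ≠ p' x} : Finset (Fin n)) := by
  have hij : i ≠ j := by rintro rfl; linarith
  rw [ssubset_iff_of_subset]
  · rcases min_choice (p' i - p i) (p j - p' j) with h | h
    · exact ⟨i, by simpa using hi.ne, by simp [transfer_apply_left _ _ hij, h]⟩
    · exact ⟨j, by simpa using hj.ne', by simp [transfer_apply_right _ _ hij, h]⟩
  · intro x hx
    simp only [mem_filter, mem_univ, true_and] at hx ⊢
    by_cases hxi : x = i
    · exact hxi ▸ hi.ne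
    by_cases hxj : x = j
    · exact hxj ▸ hj.ne'
    · rwa [transfer_apply_of_ne _ _ hxi hxj] at hx

lemma abs_sub_le_sum_abs_sub_of_transfer {f : (Fin n → ℝ) → ℝ}
    (hf : ∀ q a b m, IsResidueVector k q → IsResidueVector k (transfer q a b m) → 0 ≤ m →
      |f (transfer q a b m) - f q| ≤ 2 * m)
    {p p' : Fin n → ℝ} (hp : IsResidueVector k p) (hp' : IsResidueVector k p') :
    |f p' - f p| ≤ ∑ i, |p i - p' i| := by
  by_cases hpp : p = p'
  · simp [hpp]
  obtain ⟨i, hi⟩ := exists_lt_of_sum_eq_of_ne (hp.2.trans hp'.2.symm) hpp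
  obtain ⟨j, hj⟩ := exists_lt_of_sum_eq_of_ne (hp'.2.trans hp.2.symm) (Ne.symm hpp)
  have hij : i ≠ j := by rintro rfl; linarith
  set δ := min (p' i - p i) (p j - p' j)
  have hδi : δ ≤ p' i - p i := min_le_left _ _
  have hδj : δ ≤ p j - p' j := min_le_right _ _
  have hδ : 0 ≤ δ := le_min (by linarith) (by linarith)
  have hq := hp.transfer (a := i) (b := j) hδ (by linarith [(hp'.1 i).2])
    (by linarith [(hp'.1 j).1])
  calc |f p' - f p| ≤ |f p' - f (transfer p i j δ)| + |f (transfer p i j δ) - f p| :=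
        abs_sub_le _ _ _
    _ ≤ ∑ x, |transfer p i j δ x - p' x| + 2 * δ :=
        add_le_add (abs_sub_le_sum_abs_sub_of_transfer hf hq hp') (hf p i j δ hp hq hδ)
    _ = ∑ x, |p x - p' x| := by rw [sum_abs_sub_transfer hij hδ hδi hδj]; ring
termination_by #{x | p x ≠ p' x}
decreasing_by exact card_lt_card (filter_transfer_ne_ssubset hi hj)

namespace SelectionMonotone

variable {r : (Fin n → ℝ) → Finset (Fin n) → ℝ} {q : Fin n → ℝ} {a b : Fin n} {m : ℝ}
  {T : Finset (Fin n)}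

lemma apply_le_apply (hmono : SelectionMonotone n r) (hr : IsRoundingRule n r)
    {q' : Fin n → ℝ} (hq : IsResidueVector k q) (hq' : IsResidueVector k q')
    {A : Finset (Fin n)} (hin : ∀ i ∈ A, q i ≤ q' i) (hout : ∀ i ∉ A, q' i ≤ q i) :
    r q A ≤ r q' A := by
  by_cases hA : A.card = k
  · exact hmono k q q' hq.1 hq'.1 hq.2 hq'.2 A hA hin hout
  · rw [hr.apply_eq_zero_of_card_ne hq hA, hr.apply_eq_zero_of_card_ne hq' hA]

lemma apply_le_apply_transfer (hmono : SelectionMonotone n r) (hr : IsRoundingRule n r)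
    (hq : IsResidueVector k q) (hq' : IsResidueVector k (transfer q a b m)) (hm : 0 ≤ m)
    {A : Finset (Fin n)} (ha : a ∈ A) (hb : b ∉ A) : r q A ≤ r (transfer q a b m) A :=
  hmono.apply_le_apply hr hq hq'
    (fun _ hi => le_transfer_of_ne_right q hm (ne_of_mem_of_not_mem hi hb))
    (fun _ hi => transfer_le_of_ne_left q hm (ne_of_mem_of_not_mem ha hi).symm)

lemma sub_mem_Icc_transfer (hmono : SelectionMonotone n r) (hr : IsRoundingRule n r)
    (hq : IsResidueVector k q) (hq' : IsResidueVector k (transfer q a b m)) (hm : 0 ≤ m)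
    (ha : a ∈ T) (hb : b ∉ T) :
    r (transfer q a b m) T - r q T ∈ Set.Icc 0 (2 * m) := by
  set D : Finset (Fin n) → ℝ := fun A => r (transfer q a b m) A - r q A
  have hab : a ≠ b := ne_of_mem_of_not_mem ha hb
  have hmarg (i : Fin n) : ∑ A with i ∈ A, D A = transfer q a b m i - q i := by
    rw [sum_sub_distrib, hr.sum_filter_mem hq', hr.sum_filter_mem hq]
  have hD : ∑ A with a ∈ A ∧ b ∉ A, D A - ∑ A with b ∈ A ∧ a ∉ A, D A = 2 * m := by
    calc _ = ∑ A with a ∈ A, D A - ∑ A with b ∈ A, D A := by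
          simp only [sum_filter, ← sum_sub_distrib]
          refine sum_congr rfl fun A _ => ?_
          by_cases a ∈ A <;> by_cases b ∈ A <;> simp [*]
      _ = 2 * m := by
          rw [hmarg, hmarg, transfer_apply_left q m hab, transfer_apply_right q m hab]; ring
  have hfav : ∀ A ∈ ({A | a ∈ A ∧ b ∉ A} : Finset (Finset (Fin n))), 0 ≤ D A := fun A hA =>
    sub_nonneg.2 (hmono.apply_le_apply_transfer hr hq hq' hm (mem_filter.1 hA).2.1
      (mem_filter.1 hA).2.2)
  have hunfav : ∀ A ∈ ({A | b ∈ A ∧ a ∉ A} : Finset (Finset (Fin n))), D A ≤ 0 := by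
    intro A hA
    have := hmono.apply_le_apply_transfer hr hq' (by rwa [transfer_transfer_swap]) hm
      (mem_filter.1 hA).2.1 (mem_filter.1 hA).2.2
    exact sub_nonpos.2 (by rwa [transfer_transfer_swap] at this)
  have hT : D T ≤ ∑ A with a ∈ A ∧ b ∉ A, D A :=
    single_le_sum hfav (by simp [ha, hb])
  exact ⟨hfav T (by simp [ha, hb]), by linarith [sum_nonpos hunfav]⟩


lemma abs_sub_le_of_common_source (hmono : SelectionMonotone n r) (hr : IsRoundingRule n r)
    {c d : Fin n} (hq : IsResidueVector k q) (hqab : IsResidueVector k (transfer q a b m))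
    (hqcd : IsResidueVector k (transfer q c d m)) (hm : 0 ≤ m)
    (ha : a ∈ T) (hb : b ∉ T) (hc : c ∈ T) (hd : d ∉ T) :
    |r (transfer q a b m) T - r (transfer q c d m) T| ≤ 2 * m := by
  obtain ⟨h1, h2⟩ := hmono.sub_mem_Icc_transfer hr hq hqab hm ha hb
  obtain ⟨h3, h4⟩ := hmono.sub_mem_Icc_transfer hr hq hqcd hm hc hd
  simpa using abs_sub_le_of_nonneg_of_le h1 h2 h3 h4

lemma abs_sub_le_of_common_target (hmono : SelectionMonotone n r) (hr : IsRoundingRule n r)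
    {q' : Fin n → ℝ} {c d : Fin n} (hq : IsResidueVector k q) (hq' : IsResidueVector k q')
    (hz : IsResidueVector k (transfer q a b m)) (heq : transfer q' c d m = transfer q a b m)
    (hm : 0 ≤ m) (ha : a ∈ T) (hb : b ∉ T) (hc : c ∈ T) (hd : d ∉ T) :
    |r q' T - r q T| ≤ 2 * m := by
  obtain ⟨h1, h2⟩ := hmono.sub_mem_Icc_transfer hr hq hz hm ha hb
  obtain ⟨h3, h4⟩ := hmono.sub_mem_Icc_transfer hr hq' (heq ▸ hz) hm hc hd
  rw [heq] at h3 h4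
  simpa using abs_sub_le_of_nonneg_of_le h1 h2 h3 h4

/-- The vector halfway along the route through `l` is a common source or a common target of two
transfers towards `T`. -/
lemma abs_sub_le_transfer_of_route (hmono : SelectionMonotone n r) (hr : IsRoundingRule n r)
    {l : Fin n} (hq : IsResidueVector k q) (hq' : IsResidueVector k (transfer q a b m))
    (hm : 0 ≤ m) (hab : a ≠ b) (hside : a ∈ T ↔ b ∈ T) (hl : l ∈ T ↔ a ∉ T)
    (hroom : m ≤ q l ∨ q l + m < 1) :
    |r (transfer q a b m) T - r q T| ≤ 2 * m := by
  have hqa : q a + m < 1 := by simpa [transfer_apply_left q m hab] using (hq'.1 a).2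
  have hqb : m ≤ q b := by simpa [transfer_apply_right q m hab] using (hq'.1 b).1
  rcases hroom with hql | hql
  · have hz := hq.transfer hm hqa hql
    have hzq := transfer_transfer_swap q a l m
    have hzq' := transfer_trans q a l b m
    by_cases hlT : l ∈ T
    · have := hmono.abs_sub_le_of_common_source hr hz (hzq ▸ hq) (hzq' ▸ hq') hm hlT
        (by tauto) hlT (by tauto)
      rwa [hzq, hzq', abs_sub_comm] at this
    · refine hmono.abs_sub_le_of_common_target hr (c := b) (d := l) hq hq' hz ?_ hm
        (by tauto) hlT (by tauto) hlT
      rw [transfer_trans]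
  · have hz := hq.transfer hm hql hqb
    have hzq := transfer_transfer_swap q l b m
    have hzq' : transfer (transfer q l b m) a l m = transfer q a b m := by
      rw [transfer_comm, transfer_trans]
    by_cases hlT : l ∈ T
    · refine hmono.abs_sub_le_of_common_target hr (c := l) (d := a) hq hq' hz ?_ hm
        hlT (by tauto) hlT (by tauto)
      rw [transfer_comm, transfer_trans]
    · have := hmono.abs_sub_le_of_common_source hr hz (hzq ▸ hq) (hzq' ▸ hq') hm (by tauto) hlT
        (by tauto) hlT
      rwa [hzq, hzq', abs_sub_comm] at this

/-- Splitting the transfer into two halves guarantees room at `l` for each half, since `m < 1`. -/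
lemma abs_sub_le_transfer_of_mem_iff (hmono : SelectionMonotone n r) (hr : IsRoundingRule n r)
    (hq : IsResidueVector k q) (hq' : IsResidueVector k (transfer q a b m)) (hm : 0 ≤ m)
    (hT : T.card = k) (hab : a ≠ b) (hside : a ∈ T ↔ b ∈ T) :
    |r (transfer q a b m) T - r q T| ≤ 2 * m := by
  have hqa : q a + m < 1 := by simpa [transfer_apply_left q m hab] using (hq'.1 a).2
  have hqb : m ≤ q b := by simpa [transfer_apply_right q m hab] using (hq'.1 b).1
  rcases hm.eq_or_lt with rfl | hm_pos
  · simp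
  obtain ⟨l, hl⟩ := hq.exists_mem_iff_notMem hT (hm_pos.trans_le hqb).ne' a
  have hroom : m / 2 ≤ q l ∨ q l + m / 2 < 1 := by
    rcases le_or_gt (m / 2) (q l) with h | h
    · exact Or.inl h
    · exact Or.inr (by linarith [(hq.1 b).2])
  have hz := hq.transfer (a := a) (b := b) (m := m / 2) (by positivity) (by linarith)
    (by linarith)
  have hzz : transfer (transfer q a b (m / 2)) a b (m / 2) = transfer q a b m := by
    rw [transfer_add, add_halves]
  have hzl : transfer q a b (m / 2) l = q l :=
    transfer_apply_of_ne q _ (by rintro rfl; tauto) (by rintro rfl; tauto)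
  calc |r (transfer q a b m) T - r q T|
      ≤ |r (transfer q a b m) T - r (transfer q a b (m / 2)) T|
        + |r (transfer q a b (m / 2)) T - r q T| := abs_sub_le _ _ _
    _ ≤ 2 * (m / 2) + 2 * (m / 2) := by
        gcongr
        · rw [← hzz] at hq' ⊢
          exact hmono.abs_sub_le_transfer_of_route hr hz hq' (by positivity) hab hside hl
            (hzl ▸ hroom)
        · exact hmono.abs_sub_le_transfer_of_route hr hq hz (by positivity) hab hside hl hroom
    _ = 2 * m := by ring

lemma abs_sub_le_transfer (hmono : SelectionMonotone n r) (hr : IsRoundingRule n r)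
    (hq : IsResidueVector k q) (hq' : IsResidueVector k (transfer q a b m)) (hm : 0 ≤ m)
    (hT : T.card = k) : |r (transfer q a b m) T - r q T| ≤ 2 * m := by
  rcases eq_or_ne a b with rfl | hab
  · simpa using hm
  by_cases ha : a ∈ T <;> by_cases hb : b ∈ T
  · exact hmono.abs_sub_le_transfer_of_mem_iff hr hq hq' hm hT hab (by tauto)
  · obtain ⟨h1, h2⟩ := hmono.sub_mem_Icc_transfer hr hq hq' hm ha hb
    exact abs_le.2 ⟨by linarith, h2⟩
  · have h := hmono.sub_mem_Icc_transfer hr hq' (by rwa [transfer_transfer_swap]) hm hb ha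
    rw [transfer_transfer_swap] at h
    exact abs_le.2 ⟨by linarith [h.2], by linarith [h.1]⟩
  · exact hmono.abs_sub_le_transfer_of_mem_iff hr hq hq' hm hT hab (by tauto)

end SelectionMonotone

end

/-- Any selection monotone rounding rule is Lipschitz continuous with constant
`1` in the `ℓ₁` norm. -/
theorem selection_monotone_lipschitz {n : ℕ} (r : (Fin n → ℝ) → Finset (Fin n) → ℝ)
    (hr : IsRoundingRule n r) (hmono : SelectionMonotone n r)
    (k : ℕ) (p p' : Fin n → ℝ)
    (hp : ∀ i, 0 ≤ p i ∧ p i < 1) (hp' : ∀ i, 0 ≤ p' i ∧ p' i < 1)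
    (hsum : ∑ i, p i = (k : ℝ)) (hsum' : ∑ i, p' i = (k : ℝ))
    (T : Finset (Fin n)) (hT : T.card = k) :
    |r p' T - r p T| ≤ ∑ i, |p i - p' i| :=
  abs_sub_le_sum_abs_sub_of_transfer (f := fun q => r q T)
    (fun _ _ _ _ hq hq' hm => hmono.abs_sub_le_transfer hr hq hq' hm hT)
    ⟨hp, hsum⟩ ⟨hp', hsum'⟩
end

section
/- Grimmett's method satisfies threshold monotonicity for coalitions of size at most 2: let q, q' ∈ ℝ_{≥0}^n be two quota vectors with ∑_i q_i = ∑_i q'_i = h for some h ∈ ℕ, and let T ⊆ {1,…,n} with |T| ≤ 2 be such that q'_i ≥ q_i for all i ∈ T and q'_i ≤ q_i for all i ∉ T. Then for every θ ∈ ℕ, the Lebesgue measure of {u ∈ [0,1) : ∑_{i∈T} N_i^{q'}(u) ≥ θ} is at least the Lebesgue measure of {u ∈ [0,1) : ∑_{i∈T} N_i^{q}(u) ≥ θ}. -/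
/-!
Party `i` receives the integers in the window `(u + X_i, u + Y_i]`, where `X_i`, `Y_i` are the
quota sums over the parties before `i` and up to `i`. With `d = q - q'`, if a shift `t` satisfies
`∑_{k ≤ i} d_k ≤ t ≤ ∑_{k < i} d_k` for every `i ∈ T`, then each window of `q` at `u` lies inside
the window of `q'` at `u + t`, so `T` gets pointwise at least as many seats under `q'` after the
shift; and since seat counts are `1`-periodic in `u`, the shift does not change the measure.
Such a `t` exists because `∑_{k ≤ i} d_k ≤ ∑_{k < j} d_k` for all `i, j ∈ T`: as `|T| ≤ 2`, the
difference is a sum of values of `d` outside `T`, where `d ≥ 0` (for `j < i` after using `∑ d = 0`).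
-/

open Finset

/-- The number of seats party `i` receives under Grimmett's method with quotas
`q` and shift `u`: `⌊u + ∑_{j ≤ i} q_j⌋ − ⌊u + ∑_{j < i} q_j⌋`. -/
noncomputable def grimmettSeats {n : ℕ} (q : Fin n → ℝ) (u : ℝ) (i : Fin n) : ℤ :=
  ⌊u + ∑ j ∈ univ.filter (fun j : Fin n => j ≤ i), q j⌋ -
    ⌊u + ∑ j ∈ univ.filter (fun j : Fin n => j < i), q j⌋

open MeasureTheory

theorem volume_Ico_inter_preimage_add_of_periodic {B : Set ℝ} {c : ℝ} (hc : 0 < c)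
    (hB : MeasurableSet B) (hper : Function.Periodic (· ∈ B) c) (t : ℝ) :
    volume (Set.Ico 0 c ∩ (· + t) ⁻¹' B) = volume (Set.Ico 0 c ∩ B) := by
  have hinv : ∀ g : AddSubgroup.zmultiples c, (fun x => g +ᵥ x) ⁻¹' B = B := by
    rintro ⟨_, k, rfl⟩
    ext x
    simpa [add_comm x] using Iff.of_eq (hper.zsmul k x)
  calc volume (Set.Ico 0 c ∩ (· + t) ⁻¹' B)
      = volume (Set.Ico t (t + c) ∩ B) := by
        rw [← measure_preimage_add_right volume t (Set.Ico t (t + c) ∩ B)]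
        congr 1
        ext x
        simp only [Set.mem_inter_iff, Set.mem_Ico, Set.mem_preimage]
        constructor <;> rintro ⟨⟨h₁, h₂⟩, h₃⟩ <;> exact ⟨⟨by linarith, by linarith⟩, h₃⟩
    _ = volume (B ∩ Set.Ioc t (t + c)) := by
        rw [Set.inter_comm]
        exact measure_congr ((Filter.EventuallyEq.refl _ B).inter Ico_ae_eq_Ioc)
    _ = volume (B ∩ Set.Ioc 0 (0 + c)) :=
        (isAddFundamentalDomain_Ioc hc t).measure_set_eq (isAddFundamentalDomain_Ioc hc 0) hB hinv
    _ = volume (Set.Ico 0 c ∩ B) := by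
        rw [zero_add, Set.inter_comm]
        exact measure_congr (Ico_ae_eq_Ioc.inter (.refl _ B)).symm

theorem exists_forall_mem_Icc_of_forall_le {ι α : Type*} [Lattice α] [Nonempty α]
    (T : Finset ι) (a b : ι → α) (h : ∀ i ∈ T, ∀ j ∈ T, a i ≤ b j) :
    ∃ t, ∀ i ∈ T, t ∈ Set.Icc (a i) (b i) := by
  rcases T.eq_empty_or_nonempty with rfl | hT
  · exact ⟨Classical.arbitrary α, by simp⟩
  · exact ⟨T.sup' hT a, fun i hi => ⟨le_sup' a hi, sup'_le hT a fun j hj => h j hj i hi⟩⟩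

section PrefixSums

variable {ι : Type*} [LinearOrder ι] [LocallyFiniteOrderBot ι] {d : ι → ℝ} {i j : ι}

theorem sum_Iic_le_sum_Iio_of_lt (hij : i < j) (hd : ∀ k, i < k → k < j → 0 ≤ d k) :
    ∑ k ∈ Iic i, d k ≤ ∑ k ∈ Iio j, d k := by
  have hsub : Iic i ⊆ Iio j := fun k hk => mem_Iio.2 ((mem_Iic.1 hk).trans_lt hij)
  rw [← sum_sdiff hsub]
  refine le_add_of_nonneg_left (sum_nonneg fun k hk => ?_)
  simp only [mem_sdiff, mem_Iio, mem_Iic, not_le] at hk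
  exact hd k hk.2 hk.1

theorem sum_Iic_le_sum_Iio_of_gt [Fintype ι] (hsum : ∑ k, d k = 0) (hji : j < i)
    (hd : ∀ k, k < j ∨ i < k → 0 ≤ d k) :
    ∑ k ∈ Iic i, d k ≤ ∑ k ∈ Iio j, d k := by
  have hsub : Iio j ⊆ Iic i := fun k hk => mem_Iic.2 ((mem_Iio.1 hk).trans hji).le
  have hcompl : 0 ≤ ∑ k ∈ univ \ (Iic i \ Iio j), d k := sum_nonneg fun k hk => by
    simp only [mem_sdiff, mem_univ, mem_Iic, mem_Iio, true_and, not_and, not_not] at hk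
    exact hd k (by by_contra! h; exact (hk h.2).not_ge h.1)
  have htot := sum_sdiff (f := d) (subset_univ (Iic i \ Iio j))
  have hmid := sum_sdiff (f := d) hsub
  linarith

theorem sum_Iic_le_sum_Iio_of_card_le_two [Fintype ι] {T : Finset ι} (hT : #T ≤ 2)
    (hsum : ∑ k, d k = 0) (hneg : ∀ k ∈ T, d k ≤ 0) (hpos : ∀ k ∉ T, 0 ≤ d k)
    (hi : i ∈ T) (hj : j ∈ T) :
    ∑ k ∈ Iic i, d k ≤ ∑ k ∈ Iio j, d k := by
  classical
  rcases eq_or_ne i j with rfl | hij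
  · rw [Iic_eq_cons_Iio, sum_cons]
    linarith [hneg i hi]
  have hTij : T = {i, j} :=
    (eq_of_subset_of_card_le (insert_subset hi (singleton_subset_iff.2 hj))
      (by rwa [card_pair hij])).symm
  have hd : ∀ k, k ≠ i → k ≠ j → 0 ≤ d k := fun k hki hkj => hpos k (by simp [hTij, hki, hkj])
  rcases hij.lt_or_gt with hij | hji
  · exact sum_Iic_le_sum_Iio_of_lt hij fun k hik hkj => hd k hik.ne' hkj.ne
  · refine sum_Iic_le_sum_Iio_of_gt hsum hji fun k hk => ?_
    rcases hk with hk | hk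
    · exact hd k (hk.trans hji).ne hk.ne
    · exact hd k hk.ne' (hji.trans hk).ne'

end PrefixSums

section GrimmettSeats

variable {n : ℕ}

theorem grimmettSeats_periodic (q : Fin n → ℝ) (i : Fin n) :
    Function.Periodic (grimmettSeats q · i) 1 := fun u => by
  simp only [grimmettSeats, add_right_comm u 1, Int.floor_add_one]
  ring

theorem measurable_grimmettSeats (q : Fin n → ℝ) (i : Fin n) :
    Measurable (grimmettSeats q · i) := by
  unfold grimmettSeats
  fun_prop

theorem grimmettSeats_le_grimmettSeats_add {q q' : Fin n → ℝ} {i : Fin n} {t : ℝ}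
    (hle : ∑ k ∈ Iic i, (q k - q' k) ≤ t) (hge : t ≤ ∑ k ∈ Iio i, (q k - q' k)) (u : ℝ) :
    grimmettSeats q u i ≤ grimmettSeats q' (u + t) i := by
  simp only [grimmettSeats, filter_ge_eq_Iic, filter_gt_eq_Iio]
  rw [sum_sub_distrib] at hle hge
  have hup : ⌊u + ∑ k ∈ Iic i, q k⌋ ≤ ⌊u + t + ∑ k ∈ Iic i, q' k⌋ :=
    Int.floor_le_floor (by linarith)
  have hdown : ⌊u + t + ∑ k ∈ Iio i, q' k⌋ ≤ ⌊u + ∑ k ∈ Iio i, q k⌋ :=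
    Int.floor_le_floor (by linarith)
  omega

end GrimmettSeats

theorem grimmett_threshold_monotone_two_general {n : ℕ} (q q' : Fin n → ℝ) (h : ℕ)
    (hqs : ∑ i, q i = (h : ℝ)) (hq's : ∑ i, q' i = (h : ℝ))
    (T : Finset (Fin n)) (hT : T.card ≤ 2)
    (hup : ∀ i ∈ T, q i ≤ q' i) (hdown : ∀ i ∉ T, q' i ≤ q i) (θ : ℕ) :
    MeasureTheory.volume
        {u : ℝ | u ∈ Set.Ico (0 : ℝ) 1 ∧ (θ : ℤ) ≤ ∑ i ∈ T, grimmettSeats q u i} ≤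
      MeasureTheory.volume
        {u : ℝ | u ∈ Set.Ico (0 : ℝ) 1 ∧ (θ : ℤ) ≤ ∑ i ∈ T, grimmettSeats q' u i} := by
  obtain ⟨t, ht⟩ := exists_forall_mem_Icc_of_forall_le T
    (fun i => ∑ k ∈ Iic i, (q k - q' k)) (fun i => ∑ k ∈ Iio i, (q k - q' k))
    fun i hi j hj => sum_Iic_le_sum_Iio_of_card_le_two hT
      (by rw [sum_sub_distrib, hqs, hq's, sub_self])
      (fun k hk => sub_nonpos.2 (hup k hk)) (fun k hk => sub_nonneg.2 (hdown k hk)) hi hj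
  set S : ℝ → ℤ := fun u => ∑ i ∈ T, grimmettSeats q' u i
  have hS_periodic : Function.Periodic S 1 := fun u =>
    sum_congr rfl fun i _ => grimmettSeats_periodic q' i u
  have hS_measurable : Measurable S :=
    Finset.measurable_sum _ fun i _ => measurable_grimmettSeats q' i
  calc volume {u : ℝ | u ∈ Set.Ico (0 : ℝ) 1 ∧ (θ : ℤ) ≤ ∑ i ∈ T, grimmettSeats q u i}
      ≤ volume (Set.Ico 0 1 ∩ (· + t) ⁻¹' {u | (θ : ℤ) ≤ S u}) :=
        measure_mono fun u ⟨hu, hθ⟩ => ⟨hu, hθ.trans <| sum_le_sum fun i hi =>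
          grimmettSeats_le_grimmettSeats_add (ht i hi).1 (ht i hi).2 u⟩
    _ = volume (Set.Ico 0 1 ∩ {u | (θ : ℤ) ≤ S u}) :=
        volume_Ico_inter_preimage_add_of_periodic one_pos (hS_measurable measurableSet_Ici)
          (hS_periodic.comp ((θ : ℤ) ≤ ·)) t

/-- Grimmett's method satisfies threshold monotonicity for coalitions of size
at most 2. -/
theorem grimmett_threshold_monotone_two {n : ℕ} (q q' : Fin n → ℝ) (h : ℕ)
    (hq0 : ∀ i, 0 ≤ q i) (hq'0 : ∀ i, 0 ≤ q' i)
    (hqs : ∑ i, q i = (h : ℝ)) (hq's : ∑ i, q' i = (h : ℝ))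
    (T : Finset (Fin n)) (hT : T.card ≤ 2)
    (hup : ∀ i ∈ T, q i ≤ q' i) (hdown : ∀ i ∉ T, q' i ≤ q i) (θ : ℕ) :
    MeasureTheory.volume
        {u : ℝ | u ∈ Set.Ico (0 : ℝ) 1 ∧ (θ : ℤ) ≤ ∑ i ∈ T, grimmettSeats q u i} ≤
      MeasureTheory.volume
        {u : ℝ | u ∈ Set.Ico (0 : ℝ) 1 ∧ (θ : ℤ) ≤ ∑ i ∈ T, grimmettSeats q' u i} :=
  grimmett_threshold_monotone_two_general q q' h hqs hq's T hT hup hdown θ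
end

section
/- No apportionment method for n = 4 parties satisfying quota and ex-ante proportionality satisfies vote-count threshold monotonicity or pairwise vote-count threshold monotonicity. Concretely, for every such method a there exist vote vectors v, v' ∈ ℝ_{≥0}^{4} with positive totals, a house size h ∈ ℕ, disjoint coalitions T₁, T₂ ⊆ {1,2,3,4} with v'_i ≥ v_i for all i ∈ T₁ and v'_i ≤ v_i for all i ∉ T₁ (in particular for all i ∈ T₂), and thresholds θ₁, θ₂ ∈ ℕ such that P_{α∼a(v',h)}[∑_{i∈T₁} α_i ≥ θ₁] < P_{α∼a(v,h)}[∑_{i∈T₁} α_i ≥ θ₁] and P_{α∼a(v',h)}[∑_{i∈T₂} α_i ≥ θ₂] > P_{α∼a(v,h)}[∑_{i∈T₂} α_i ≥ θ₂]. -/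
open Finset

/-- Party `i`'s standard quota `q_i = h·v_i / ∑_j v_j`. -/
noncomputable def stdQuota {n : ℕ} (v : Fin n → ℝ) (h : ℕ) (i : Fin n) : ℝ :=
  (h : ℝ) * v i / ∑ j, v j

/-- An apportionment method: for every vote vector `v ∈ ℝ_{≥0}^n` with positive
total and house size `h`, `a v h` is a probability distribution over vectors
`α ∈ ℕ^n` summing to `h`. -/
def IsApportionment (n : ℕ) (a : (Fin n → ℝ) → ℕ → (Fin n → ℕ) → ℝ) : Prop :=
  ∀ (v : Fin n → ℝ) (h : ℕ), (∀ i, 0 ≤ v i) → 0 < ∑ j, v j →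
    (∀ α, 0 ≤ a v h α) ∧
    (∑' α : Fin n → ℕ, a v h α = 1) ∧
    (∀ α : Fin n → ℕ, a v h α ≠ 0 → ∑ i, α i = h)

/-- Quota: ex post, every party gets its lower or upper quota. -/
def SatisfiesQuota (n : ℕ) (a : (Fin n → ℝ) → ℕ → (Fin n → ℕ) → ℝ) : Prop :=
  ∀ (v : Fin n → ℝ) (h : ℕ), (∀ i, 0 ≤ v i) → 0 < ∑ j, v j →
    ∀ α : Fin n → ℕ, a v h α ≠ 0 →
      ∀ i, α i = ⌊stdQuota v h i⌋₊ ∨ α i = ⌈stdQuota v h i⌉₊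

/-- Ex-ante proportionality: each party's expected number of seats equals its
standard quota. -/
def ExAnteProportional (n : ℕ) (a : (Fin n → ℝ) → ℕ → (Fin n → ℕ) → ℝ) : Prop :=
  ∀ (v : Fin n → ℝ) (h : ℕ), (∀ i, 0 ≤ v i) → 0 < ∑ j, v j →
    ∀ i, ∑' α : Fin n → ℕ, a v h α * (α i : ℝ) = stdQuota v h i

/-- Full support: every apportionment vector satisfying quota receives positive
probability. -/
def FullSupport (n : ℕ) (a : (Fin n → ℝ) → ℕ → (Fin n → ℕ) → ℝ) : Prop :=
  ∀ (v : Fin n → ℝ) (h : ℕ), (∀ i, 0 ≤ v i) → 0 < ∑ j, v j →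
    ∀ α : Fin n → ℕ, (∑ i, α i = h) →
      (∀ i, α i = ⌊stdQuota v h i⌋₊ ∨ α i = ⌈stdQuota v h i⌉₊) → 0 < a v h α

/-!
Take house size `15` and votes `wQuota` with quotas `(11.5, 0.5, 1.5, 1.5)`. Quota confines every
outcome to the floors `(11, 0, 1, 1)` plus one seat each for some parties, and ex-ante
proportionality gives `P[α₀ = 12] = 1/2`. When party `0` gets `12` seats exactly one party
`j ∈ {1, 2, 3}` gets its upper quota, so for some `j` the coalition `{0, j}` reaches `12 + ⌈q_j⌉`
seats with probability at least `1/6`. Moving votes towards `{0, j}` while inflating the total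
(`uVotes j`) lowers party `0`'s quota to `11.15`, so now `P[α₀ = 12] = 3/20 < 1/6`: the threshold
probability of `{0, j}` falls, while that of the complementary coalition, whose threshold event
is the complementary event, rises.
-/

section EventProb

variable {β : Type*} {p : β → ℝ} {E F : β → Prop} [DecidablePred E] [DecidablePred F]

noncomputable def eventProb (p : β → ℝ) (E : β → Prop) [DecidablePred E] : ℝ :=
  ∑' x, if E x then p x else 0

lemma summable_ite_of_finite_support (hp : (Function.support p).Finite) (E : β → Prop)
    [DecidablePred E] : Summable fun x => if E x then p x else 0 :=
  summable_of_hasFiniteSupport <| hp.subset fun x hx => by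
    by_contra h0
    simp_all

lemma eventProb_congr (h : ∀ x, p x ≠ 0 → (E x ↔ F x)) : eventProb p E = eventProb p F :=
  tsum_congr fun x => by
    by_cases hx : p x = 0
    · simp [hx]
    · simp only [h x hx]

lemma eventProb_mono (hp : (Function.support p).Finite) (hnn : ∀ x, 0 ≤ p x)
    (h : ∀ x, p x ≠ 0 → E x → F x) : eventProb p E ≤ eventProb p F := by
  refine Summable.tsum_le_tsum (fun x => ?_) (summable_ite_of_finite_support hp E)
    (summable_ite_of_finite_support hp F)
  by_cases hx : p x = 0
  · simp [hx]
  · split_ifs with hE hF hF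
    · exact le_rfl
    · exact absurd (h x hx hE) hF
    · exact hnn x
    · exact le_rfl

lemma eventProb_or (hp : (Function.support p).Finite) (h : ∀ x, p x ≠ 0 → E x → ¬F x) :
    eventProb p (fun x => E x ∨ F x) = eventProb p E + eventProb p F := by
  rw [eventProb, eventProb, eventProb, ← Summable.tsum_add (summable_ite_of_finite_support hp E)
    (summable_ite_of_finite_support hp F)]
  refine tsum_congr fun x => ?_
  by_cases hx : p x = 0
  · simp [hx]
  · by_cases hE : E x
    · simp [hE, h x hx hE]
    · simp [hE]

lemma eventProb_not (hp : (Function.support p).Finite) :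
    eventProb p (fun x => ¬E x) = ∑' x, p x - eventProb p E := by
  have hor := eventProb_or (E := E) (F := fun x => ¬E x) hp fun _ _ hE hnE => hnE hE
  have htot : eventProb p (fun x => E x ∨ ¬E x) = ∑' x, p x := by simp [eventProb, em]
  linarith

lemma tsum_mul_eq_add_eventProb (hp : (Function.support p).Finite) (f : β → ℕ) (k : ℕ)
    (hf : ∀ x, p x ≠ 0 → f x = k ∨ f x = k + 1) :
    ∑' x, p x * f x = k * ∑' x, p x + eventProb p (fun x => f x = k + 1) := by
  have hpoint : ∀ x, p x * f x = k * p x + if f x = k + 1 then p x else 0 := by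
    intro x
    by_cases hx : p x = 0
    · simp [hx]
    · rcases hf x hx with hk | hk <;> simp [hk] <;> ring
  rw [tsum_congr hpoint, Summable.tsum_add ((summable_of_hasFiniteSupport hp).mul_left _)
    (summable_ite_of_finite_support hp _), tsum_mul_left, eventProb]

end EventProb

section Apportionment

variable {n : ℕ} {a : (Fin n → ℝ) → ℕ → (Fin n → ℕ) → ℝ} {v : Fin n → ℝ} {h : ℕ}

lemma stdQuota_smul {c : ℝ} (hc : c ≠ 0) : stdQuota (c • v) h = stdQuota v h := by
  ext i
  simp only [stdQuota, Pi.smul_apply, smul_eq_mul, ← Finset.mul_sum]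
  rw [mul_left_comm, mul_div_mul_left _ _ hc]

lemma stdQuota_of_sum_eq (hv : ∑ j, v j = h) (hh : h ≠ 0) : stdQuota v h = v := by
  ext i
  rw [stdQuota, hv, mul_div_cancel_left₀ _ (Nat.cast_ne_zero.mpr hh)]

lemma IsApportionment.finite_support (h1 : IsApportionment n a) (hv : ∀ i, 0 ≤ v i)
    (hvs : 0 < ∑ j, v j) : (Function.support (a v h)).Finite := by
  refine (Fintype.piFinset fun _ => range (h + 1)).finite_toSet.subset fun α hα => ?_
  rw [mem_coe, Fintype.mem_piFinset]
  intro i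
  rw [mem_range]
  have hsum := (h1 v h hv hvs).2.2 α hα
  have := Finset.single_le_sum (fun j _ => Nat.zero_le (α j)) (mem_univ i)
  omega

lemma SatisfiesQuota.eq_or_eq_succ (h2 : SatisfiesQuota n a) (hv : ∀ i, 0 ≤ v i)
    (hvs : 0 < ∑ j, v j) {α : Fin n → ℕ} (hα : a v h α ≠ 0) {i : Fin n} {k : ℕ}
    (hk : stdQuota v h i ∈ Set.Ioo (k : ℝ) (k + 1)) : α i = k ∨ α i = k + 1 := by
  have hfloor : ⌊stdQuota v h i⌋₊ = k :=
    (Nat.floor_eq_iff ((Nat.cast_nonneg k).trans hk.1.le)).mpr ⟨hk.1.le, hk.2⟩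
  have hceil : ⌈stdQuota v h i⌉₊ = k + 1 :=
    (Nat.ceil_eq_iff k.succ_ne_zero).mpr ⟨by simpa using hk.1, by exact_mod_cast hk.2.le⟩
  simpa [hfloor, hceil] using h2 v h hv hvs α hα i

lemma eventProb_eq_succ (h1 : IsApportionment n a) (h2 : SatisfiesQuota n a)
    (h3 : ExAnteProportional n a) (hv : ∀ i, 0 ≤ v i) (hvs : 0 < ∑ j, v j) {i : Fin n} {k : ℕ}
    (hk : stdQuota v h i ∈ Set.Ioo (k : ℝ) (k + 1)) :
    eventProb (a v h) (fun α => α i = k + 1) = stdQuota v h i - k := by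
  have hmean := tsum_mul_eq_add_eventProb (h1.finite_support hv hvs) (fun α => α i) k
    fun α hα => h2.eq_or_eq_succ hv hvs hα hk
  rw [h3 v h hv hvs i, (h1 v h hv hvs).2.1] at hmean
  linarith

end Apportionment

/-- On outcomes with `h` seats in total, `T` reaches `θ₁` seats exactly when `Tᶜ` misses `θ₂`. -/
lemma eventProb_compl_eq_one_sub {ι : Type*} [Fintype ι] [DecidableEq ι] {p : (ι → ℕ) → ℝ}
    {h : ℕ} (hp : (Function.support p).Finite) (htot : ∑' α, p α = 1)
    (hsum : ∀ α, p α ≠ 0 → ∑ i, α i = h) (T : Finset ι) {θ₁ θ₂ : ℕ} (hθ : θ₁ + θ₂ = h + 1) :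
    eventProb p (fun α => θ₂ ≤ ∑ i ∈ Tᶜ, α i) = 1 - eventProb p (fun α => θ₁ ≤ ∑ i ∈ T, α i) := by
  rw [← htot, ← eventProb_not hp]
  refine eventProb_congr fun α hα => ?_
  have := sum_add_sum_compl T α
  rw [hsum α hα] at this
  omega

section FourParties

variable {a : (Fin 4 → ℝ) → ℕ → (Fin 4 → ℕ) → ℝ} {α : Fin 4 → ℕ} {j : Fin 4}

def floors : Fin 4 → ℕ := ![11, 0, 1, 1]

noncomputable def wQuota (i : Fin 4) : ℝ := floors i + 1 / 2

noncomputable def uQuota (j i : Fin 4) : ℝ :=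
  floors i + if i = 0 then 3 / 20 else if i = j then 19 / 20 else 9 / 20

/-- The factor `129/125` is large enough for party `0` and party `j` to gain votes over `wQuota`,
and small enough for the remaining parties to lose votes. -/
noncomputable def uVotes (j : Fin 4) : Fin 4 → ℝ := (129 / 125 : ℝ) • uQuota j

/-- `12 + ⌈q_j⌉`: the coalition `{0, j}` reaches it iff both members get their upper quota. -/
def threshold (j : Fin 4) : ℕ := 13 + floors j

def Bracketed (α : Fin 4 → ℕ) : Prop :=
  (∀ i, α i = floors i ∨ α i = floors i + 1) ∧ ∑ i, α i = 15

lemma wQuota_mem_Ioo (i : Fin 4) : wQuota i ∈ Set.Ioo (floors i : ℝ) (floors i + 1) := by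
  constructor <;> simp only [wQuota] <;> linarith

lemma uQuota_mem_Ioo (j i : Fin 4) : uQuota j i ∈ Set.Ioo (floors i : ℝ) (floors i + 1) := by
  constructor <;> simp only [uQuota] <;> split_ifs <;> linarith

lemma sum_wQuota : ∑ i, wQuota i = 15 := by
  simp [wQuota, floors, Fin.sum_univ_four]
  norm_num

lemma sum_uQuota (hj : j ≠ 0) : ∑ i, uQuota j i = 15 := by
  fin_cases j
  · contradiction
  all_goals simp [uQuota, floors, Fin.sum_univ_four]; norm_num

lemma wQuota_nonneg (i : Fin 4) : 0 ≤ wQuota i :=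
  (Nat.cast_nonneg _).trans (wQuota_mem_Ioo i).1.le

lemma uVotes_nonneg (j i : Fin 4) : 0 ≤ uVotes j i :=
  mul_nonneg (by norm_num) ((Nat.cast_nonneg _).trans (uQuota_mem_Ioo j i).1.le)

lemma sum_wQuota_pos : 0 < ∑ i, wQuota i := by
  rw [sum_wQuota]
  norm_num

lemma sum_uVotes_pos (hj : j ≠ 0) : 0 < ∑ i, uVotes j i := by
  simp only [uVotes, Pi.smul_apply, smul_eq_mul, ← mul_sum, sum_uQuota hj]
  norm_num

lemma stdQuota_wQuota : stdQuota wQuota 15 = wQuota :=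
  stdQuota_of_sum_eq sum_wQuota (by norm_num)

lemma stdQuota_uVotes (hj : j ≠ 0) : stdQuota (uVotes j) 15 = uQuota j := by
  rw [uVotes, stdQuota_smul (by norm_num), stdQuota_of_sum_eq (sum_uQuota hj) (by norm_num)]

lemma wQuota_le_uVotes {i : Fin 4} (hi : i ∈ ({0, j} : Finset (Fin 4))) :
    wQuota i ≤ uVotes j i := by
  fin_cases i <;> fin_cases j <;> simp_all [wQuota, uVotes, uQuota, floors] <;> norm_num

lemma uVotes_le_wQuota (hj : j ≠ 0) {i : Fin 4} (hi : i ∉ ({0, j} : Finset (Fin 4))) :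
    uVotes j i ≤ wQuota i := by
  fin_cases i <;> fin_cases j <;> simp_all [wQuota, uVotes, uQuota, floors] <;> norm_num

lemma threshold_add (hj : j ≠ 0) : threshold j + (3 - floors j) = 15 + 1 := by
  fin_cases j <;> simp_all [threshold, floors]

lemma Bracketed.of_apportionment (h1 : IsApportionment 4 a) (h2 : SatisfiesQuota 4 a)
    {v : Fin 4 → ℝ} (hv : ∀ i, 0 ≤ v i) (hvs : 0 < ∑ j, v j)
    (hq : ∀ i, stdQuota v 15 i ∈ Set.Ioo (floors i : ℝ) (floors i + 1)) (hα : a v 15 α ≠ 0) :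
    Bracketed α :=
  ⟨fun i => h2.eq_or_eq_succ hv hvs hα (hq i), (h1 v 15 hv hvs).2.2 α hα⟩

lemma Bracketed.eq_twelve_of_threshold_le (hα : Bracketed α)
    (hθ : threshold j ≤ ∑ i ∈ {0, j}, α i) : α 0 = 12 := by
  obtain ⟨hi, hs⟩ := hα
  have := hi 0; have := hi 1; have := hi 2; have := hi 3
  fin_cases j <;> simp_all [threshold, floors, Fin.sum_univ_four] <;> omega

lemma Bracketed.eq_of_threshold_le {k : Fin 4} (hα : Bracketed α) (hj : j ≠ 0) (hk : k ≠ 0)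
    (hθj : threshold j ≤ ∑ i ∈ {0, j}, α i) (hθk : threshold k ≤ ∑ i ∈ {0, k}, α i) :
    j = k := by
  obtain ⟨hi, hs⟩ := hα
  have := hi 0; have := hi 1; have := hi 2; have := hi 3
  fin_cases j <;> fin_cases k <;> simp_all [threshold, floors, Fin.sum_univ_four] <;> omega

lemma Bracketed.eq_twelve_iff (hα : Bracketed α) :
    α 0 = 12 ↔ (threshold 1 ≤ ∑ i ∈ {0, 1}, α i ∨ threshold 2 ≤ ∑ i ∈ {0, 2}, α i) ∨
      threshold 3 ≤ ∑ i ∈ {0, 3}, α i := by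
  obtain ⟨hi, hs⟩ := hα
  have := hi 0; have := hi 1; have := hi 2; have := hi 3
  simp_all [threshold, floors, Fin.sum_univ_four]
  omega

lemma exists_threshold_eventProb_ge (h1 : IsApportionment 4 a) (h2 : SatisfiesQuota 4 a)
    (h3 : ExAnteProportional 4 a) :
    ∃ j ≠ 0, 1 / 6 ≤ eventProb (a wQuota 15) (fun α => threshold j ≤ ∑ i ∈ {0, j}, α i) := by
  have hIoo : ∀ i, stdQuota wQuota 15 i ∈ Set.Ioo (floors i : ℝ) (floors i + 1) := by
    rw [stdQuota_wQuota]; exact wQuota_mem_Ioo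
  have hp := h1.finite_support (h := 15) wQuota_nonneg sum_wQuota_pos
  have hbr α : a wQuota 15 α ≠ 0 → Bracketed α :=
    Bracketed.of_apportionment h1 h2 wQuota_nonneg sum_wQuota_pos hIoo
  have hdisj {j k : Fin 4} (hj : j ≠ 0) (hk : k ≠ 0) (hjk : j ≠ k) α (hα : a wQuota 15 α ≠ 0)
      (hθj : threshold j ≤ ∑ i ∈ {0, j}, α i) : ¬threshold k ≤ ∑ i ∈ {0, k}, α i :=
    fun hθk => hjk ((hbr α hα).eq_of_threshold_le hj hk hθj hθk)
  have hhalf : eventProb (a wQuota 15) (fun α => α 0 = 12) = 1 / 2 := by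
    have h12 := eventProb_eq_succ h1 h2 h3 wQuota_nonneg sum_wQuota_pos (hIoo 0)
    rw [stdQuota_wQuota] at h12
    norm_num [wQuota, floors] at h12
    exact h12
  rw [eventProb_congr fun α hα => (hbr α hα).eq_twelve_iff,
    eventProb_or hp fun α hα => Or.rec (hdisj (by decide) (by decide) (by decide) α hα)
      (hdisj (by decide) (by decide) (by decide) α hα),
    eventProb_or hp (hdisj (by decide) (by decide) (by decide))] at hhalf
  by_contra! hlt
  linarith [hlt 1 (by decide), hlt 2 (by decide), hlt 3 (by decide)]

lemma eventProb_threshold_le (h1 : IsApportionment 4 a) (h2 : SatisfiesQuota 4 a)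
    (h3 : ExAnteProportional 4 a) (hj : j ≠ 0) :
    eventProb (a (uVotes j) 15) (fun α => threshold j ≤ ∑ i ∈ {0, j}, α i) ≤ 3 / 20 := by
  have hIoo : ∀ i, stdQuota (uVotes j) 15 i ∈ Set.Ioo (floors i : ℝ) (floors i + 1) := by
    rw [stdQuota_uVotes hj]; exact uQuota_mem_Ioo j
  have hv := uVotes_nonneg j
  have hvs := sum_uVotes_pos hj
  calc eventProb (a (uVotes j) 15) (fun α => threshold j ≤ ∑ i ∈ {0, j}, α i)
      ≤ eventProb (a (uVotes j) 15) (fun α => α 0 = 12) :=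
        eventProb_mono (h1.finite_support hv hvs) (h1 _ 15 hv hvs).1 fun α hα hθ =>
          (Bracketed.of_apportionment h1 h2 hv hvs hIoo hα).eq_twelve_of_threshold_le hθ
    _ = 3 / 20 := by
      have h12 := eventProb_eq_succ h1 h2 h3 hv hvs (hIoo 0)
      rw [stdQuota_uVotes hj] at h12
      norm_num [uQuota, floors] at h12
      exact h12

end FourParties

/-- No apportionment method (for 4 parties) satisfying quota and ex-ante
proportionality satisfies vote-count threshold monotonicity or its pairwise
variant: there is a pair of vote vectors, with votes weakly increasing on a
coalition `T₁` and weakly decreasing elsewhere (in particular on a disjoint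
coalition `T₂`), for which `T₁`'s threshold probability strictly decreases
while `T₂`'s strictly increases. -/
theorem no_vote_count_threshold_monotone
    (a : (Fin 4 → ℝ) → ℕ → (Fin 4 → ℕ) → ℝ)
    (h1 : IsApportionment 4 a) (h2 : SatisfiesQuota 4 a)
    (h3 : ExAnteProportional 4 a) :
    ∃ (v v' : Fin 4 → ℝ) (h : ℕ) (T₁ T₂ : Finset (Fin 4)) (θ₁ θ₂ : ℕ),
      (∀ i, 0 ≤ v i) ∧ 0 < ∑ j, v j ∧ (∀ i, 0 ≤ v' i) ∧ 0 < ∑ j, v' j ∧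
      Disjoint T₁ T₂ ∧
      (∀ i ∈ T₁, v i ≤ v' i) ∧
      (∀ i ∉ T₁, v' i ≤ v i) ∧
      (∑' α : Fin 4 → ℕ, if θ₁ ≤ ∑ i ∈ T₁, α i then a v' h α else 0) <
        (∑' α : Fin 4 → ℕ, if θ₁ ≤ ∑ i ∈ T₁, α i then a v h α else 0) ∧
      (∑' α : Fin 4 → ℕ, if θ₂ ≤ ∑ i ∈ T₂, α i then a v h α else 0) <
        (∑' α : Fin 4 → ℕ, if θ₂ ≤ ∑ i ∈ T₂, α i then a v' h α else 0) := by
  obtain ⟨j, hj, hw⟩ := exists_threshold_eventProb_ge h1 h2 h3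
  have hu := eventProb_threshold_le h1 h2 h3 hj
  have hlt : eventProb (a (uVotes j) 15) (fun α => threshold j ≤ ∑ i ∈ {0, j}, α i) <
      eventProb (a wQuota 15) (fun α => threshold j ≤ ∑ i ∈ {0, j}, α i) := by
    linarith
  refine ⟨wQuota, uVotes j, 15, {0, j}, {0, j}ᶜ, threshold j, 3 - floors j, wQuota_nonneg,
    sum_wQuota_pos, uVotes_nonneg j, sum_uVotes_pos hj, disjoint_compl_right,
    fun i => wQuota_le_uVotes, fun i => uVotes_le_wQuota hj, hlt, ?_⟩
  have hcompl {v : Fin 4 → ℝ} (hv : ∀ i, 0 ≤ v i) (hvs : 0 < ∑ i, v i) :=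
    eventProb_compl_eq_one_sub (h1.finite_support hv hvs) (h1 v 15 hv hvs).2.1
      (h1 v 15 hv hvs).2.2 {0, j} (threshold_add hj)
  change eventProb _ _ < eventProb _ _
  rw [hcompl wQuota_nonneg sum_wQuota_pos, hcompl (uVotes_nonneg j) (sum_uVotes_pos hj)]
  linarith
end

section
/- Let r be a neutral rounding rule for n parties. Suppose that for every integer k with 1 ≤ k ≤ n−1 and all residue vectors p, p' ∈ [0,1)^n each summing to k such that p'_1 ≥ p_1, p'_n ≤ p_n, and p'_i = p_i for all 1 < i < n, it holds that P[r(p') = {1,…,k}] ≥ P[r(p) = {1,…,k}]. Then r satisfies selection monotonicity. -/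
open Finset

/-- Neutrality: permuting the parties permutes the distribution accordingly. -/
def NeutralRule (n : ℕ) (r : (Fin n → ℝ) → Finset (Fin n) → ℝ) : Prop :=
  ∀ (σ : Equiv.Perm (Fin n)) (p : Fin n → ℝ) (k : ℕ),
    (∀ i, 0 ≤ p i ∧ p i < 1) → (∑ i, p i = (k : ℝ)) →
    ∀ A : Finset (Fin n), r (fun j => p (σ.symm j)) (A.image σ) = r p A

/-!
Write `p ≤ p'` on `T` and `p' ≤ p` off `T`, with equal sums. Then `p'` is reached from `p` by
finitely many transfers of mass from a party outside `T` to a party inside `T`, each of which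
makes one more coordinate agree with `p'` and stays inside the residue box. Neutrality relabels
the parties so that the two parties of a transfer become the first and the last, and `T` becomes
`{1,…,k}`; the hypothesis then says that no transfer decreases `P[r(p) = T]`.
-/

theorem Finset.exists_equiv_apply_eq {α β : Type*} [DecidableEq β] {s : Finset α}
    {t : Finset β} (h : #s = #t) {a : α} {c : β} (ha : a ∈ s) (hc : c ∈ t) :
    ∃ e : s ≃ t, (e ⟨a, ha⟩ : β) = c := by
  obtain ⟨e, he⟩ := Finset.exists_equiv_extend_of_card_eq (α := s) (s := {⟨a, ha⟩})
    (f := fun _ => c) (by rw [Fintype.card_coe, h]) (by simpa using hc) (by simp)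
  exact ⟨e, he _ (mem_singleton_self _)⟩

theorem Equiv.Perm.exists_image_eq_of_mem_of_notMem {α : Type*} [Fintype α] [DecidableEq α]
    {s t : Finset α} (h : #s = #t) {a b c d : α} (ha : a ∈ s) (hb : b ∉ s) (hc : c ∈ t)
    (hd : d ∉ t) : ∃ σ : Equiv.Perm α, s.image σ = t ∧ σ a = c ∧ σ b = d := by
  obtain ⟨e, he⟩ := exists_equiv_apply_eq h ha hc
  obtain ⟨f, hf⟩ := exists_equiv_apply_eq (s := sᶜ) (t := tᶜ) (by simp [card_compl, h])
    (mem_compl.2 hb) (mem_compl.2 hd)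
  let f' : {x // x ∉ s} ≃ {x // x ∉ t} :=
    (Equiv.subtypeEquivRight fun _ => mem_compl).symm.trans
      (f.trans (Equiv.subtypeEquivRight fun _ => mem_compl))
  let σ := Equiv.subtypeCongr e f'
  have hσ_mem : ∀ x (hx : x ∈ s), σ x = e ⟨x, hx⟩ := by
    intro x hx
    simp [σ, Equiv.subtypeCongr, hx]
  have hσ_notMem : ∀ x (hx : x ∉ s), σ x = f' ⟨x, hx⟩ := by
    intro x hx
    simp [σ, Equiv.subtypeCongr, hx]
  refine ⟨σ, eq_of_subset_of_card_le ?_ ?_, by rw [hσ_mem a ha, he], ?_⟩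
  · exact image_subset_iff.2 fun x hx => hσ_mem x hx ▸ (e _).2
  · rw [card_image_of_injective _ σ.injective, h]
  · rw [hσ_notMem b hb, ← hf]
    rfl

section Transfer

variable {ι : Type*} [Fintype ι]

/-- Together with `∑ i, q i = ∑ i, p i`, this says that `q` arises from `p` by moving mass from
one coordinate outside `T` to one inside `T`. -/
def IsTransferInto (T : Finset ι) (p q : ι → ℝ) : Prop :=
  ∃ i ∈ T, ∃ j ∉ T, p i ≤ q i ∧ q j ≤ p j ∧ ∀ l, l ≠ i → l ≠ j → q l = p l

theorem exists_gain_and_loss {T : Finset ι} {p p' : ι → ℝ}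
    (hsum : ∑ i, p' i = ∑ i, p i) (hT : ∀ i ∈ T, p i ≤ p' i) (hTc : ∀ i ∉ T, p' i ≤ p i)
    (hne : p ≠ p') : (∃ i ∈ T, p i < p' i) ∧ ∃ j ∉ T, p' j < p j := by
  obtain ⟨l, hl⟩ := Function.ne_iff.1 hne
  obtain ⟨i, -, hi⟩ := exists_pos_of_sum_zero_of_exists_nonzero (fun i => p' i - p i)
    (by rw [sum_sub_distrib, hsum, sub_self]) ⟨l, mem_univ _, sub_ne_zero.2 hl.symm⟩
  obtain ⟨j, -, hj⟩ := exists_pos_of_sum_zero_of_exists_nonzero (fun i => p i - p' i)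
    (by rw [sum_sub_distrib, hsum, sub_self]) ⟨l, mem_univ _, sub_ne_zero.2 hl⟩
  refine ⟨⟨i, ?_, sub_pos.1 hi⟩, ⟨j, ?_, sub_pos.1 hj⟩⟩
  · by_contra hiT
    linarith [hTc i hiT]
  · intro hjT
    linarith [hT j hjT]

theorem exists_isTransferInto_closer [DecidableEq ι] {T : Finset ι} {p p' : ι → ℝ}
    (hsum : ∑ i, p' i = ∑ i, p i) (hT : ∀ i ∈ T, p i ≤ p' i) (hTc : ∀ i ∉ T, p' i ≤ p i)
    (hne : p ≠ p') :
    ∃ q, IsTransferInto T p q ∧ ∑ i, q i = ∑ i, p i ∧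
      (∀ i ∈ T, p i ≤ q i ∧ q i ≤ p' i) ∧ (∀ i ∉ T, p' i ≤ q i ∧ q i ≤ p i) ∧
      #{l | q l ≠ p' l} < #{l | p l ≠ p' l} := by
  obtain ⟨⟨i, hiT, hi⟩, ⟨j, hjT, hj⟩⟩ := exists_gain_and_loss hsum hT hTc hne
  have hij : i ≠ j := ne_of_mem_of_not_mem hiT hjT
  -- the largest transfer from `j` to `i` that overshoots neither target
  set δ := min (p' i - p i) (p j - p' j) with hδ
  have hδi : δ ≤ p' i - p i := min_le_left _ _
  have hδj : δ ≤ p j - p' j := min_le_right _ _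
  have hδ0 : 0 ≤ δ := le_min (by linarith) (by linarith)
  set q : ι → ℝ := p + Pi.single i δ - Pi.single j δ with hq
  have hqi : q i = p i + δ := by simp [hq, hij]
  have hqj : q j = p j - δ := by simp [hq, hij.symm]
  have hq_other : ∀ l, l ≠ i → l ≠ j → q l = p l := by
    intro l hli hlj
    simp [hq, hli, hlj]
  refine ⟨q, ⟨i, hiT, j, hjT, by linarith, by linarith, hq_other⟩, ?_, ?_, ?_, ?_⟩
  · simp [hq, sum_add_distrib, sum_sub_distrib]
  · intro l hl
    rcases eq_or_ne l i with rfl | hli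
    · exact ⟨by linarith, by linarith⟩
    · rw [hq_other l hli (ne_of_mem_of_not_mem hl hjT)]
      exact ⟨le_rfl, hT l hl⟩
  · intro l hl
    rcases eq_or_ne l j with rfl | hlj
    · exact ⟨by linarith, by linarith⟩
    · rw [hq_other l (ne_of_mem_of_not_mem hiT hl).symm hlj]
      exact ⟨hTc l hl, le_rfl⟩
  · have hsub : univ.filter (fun l => q l ≠ p' l) ⊆ univ.filter fun l => p l ≠ p' l := by
      intro l
      simp only [mem_filter, mem_univ, true_and]
      contrapose!
      intro hl
      rcases eq_or_ne l i with rfl | hli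
      · linarith
      rcases eq_or_ne l j with rfl | hlj
      · linarith
      rw [hq_other l hli hlj, hl]
    refine card_lt_card ((ssubset_iff_of_subset hsub).2 ?_)
    rcases min_choice (p' i - p i) (p j - p' j) with hmin | hmin
    · exact ⟨i, by simp [hi.ne], by simp [hqi, hδ, hmin]⟩
    · exact ⟨j, by simp [hj.ne'], by simp [hqj, hδ, hmin]⟩

theorem le_of_forall_isTransferInto {D : Set (ι → ℝ)}
    (hD : ∀ p ∈ D, ∀ p' ∈ D, ∀ q ∈ Set.uIcc p p', ∑ i, q i = ∑ i, p i → q ∈ D)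
    {F : (ι → ℝ) → ℝ} {T : Finset ι} (hF : ∀ p ∈ D, ∀ q ∈ D, IsTransferInto T p q → F p ≤ F q)
    {p p' : ι → ℝ} (hp : p ∈ D) (hp' : p' ∈ D) (hsum : ∑ i, p' i = ∑ i, p i)
    (hT : ∀ i ∈ T, p i ≤ p' i) (hTc : ∀ i ∉ T, p' i ≤ p i) : F p ≤ F p' := by
  classical
  induction hm : #{l | p l ≠ p' l} using Nat.strong_induction_on generalizing p with
  | _ m ih =>
  rcases eq_or_ne p p' with rfl | hne
  · exact le_rfl
  obtain ⟨q, htr, hq_sum, hqT, hqTc, hq_card⟩ := exists_isTransferInto_closer hsum hT hTc hne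
  have hq_mem : q ∈ Set.uIcc p p' := by
    refine ⟨fun l => ?_, fun l => ?_⟩ <;> by_cases hl : l ∈ T
    · exact inf_le_left.trans (hqT l hl).1
    · exact inf_le_right.trans (hqTc l hl).1
    · exact (hqT l hl).2.trans le_sup_right
    · exact (hqTc l hl).2.trans le_sup_left
  have hqD : q ∈ D := hD p hp p' hp' q hq_mem hq_sum
  exact (hF p hp q hqD htr).trans <| ih _ (hm ▸ hq_card) hqD (hsum.trans hq_sum.symm)
    (fun l hl => (hqT l hl).2) (fun l hl => (hqTc l hl).1) rfl

end Transfer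

/-- Parties `1` and `n` are `0` and `n - 1` here, and `{1,…,k}` is `{i | i.val < k}`. -/
def TwoPointMonotone (n : ℕ) (r : (Fin n → ℝ) → Finset (Fin n) → ℝ) : Prop :=
  ∀ (k : ℕ) (hk1 : 1 ≤ k) (hkn : k ≤ n - 1) (p p' : Fin n → ℝ),
    (∀ i, 0 ≤ p i ∧ p i < 1) → (∀ i, 0 ≤ p' i ∧ p' i < 1) →
    (∑ i, p i = (k : ℝ)) → (∑ i, p' i = (k : ℝ)) →
    have hn : 0 < n := hk1.trans (hkn.trans (Nat.sub_le n 1))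
    p ⟨0, hn⟩ ≤ p' ⟨0, hn⟩ →
    p' ⟨n - 1, Nat.sub_one_lt hn.ne'⟩ ≤ p ⟨n - 1, Nat.sub_one_lt hn.ne'⟩ →
    (∀ i : Fin n, 0 < i.val → i.val < n - 1 → p' i = p i) →
    r p (univ.filter fun i : Fin n => i.val < k) ≤
      r p' (univ.filter fun i : Fin n => i.val < k)

theorem NeutralRule.le_of_isTransferInto {n : ℕ} {r : (Fin n → ℝ) → Finset (Fin n) → ℝ}
    (hneutral : NeutralRule n r) (hcond : TwoPointMonotone n r) {k : ℕ} {T : Finset (Fin n)}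
    (hT : #T = k) {p q : Fin n → ℝ} (hp : ∀ i, 0 ≤ p i ∧ p i < 1)
    (hq : ∀ i, 0 ≤ q i ∧ q i < 1) (hsp : ∑ i, p i = k) (hsq : ∑ i, q i = k)
    (htr : IsTransferInto T p q) : r p T ≤ r q T := by
  obtain ⟨i, hiT, j, hjT, hpi, hqj, hq_other⟩ := htr
  have hk1 : 1 ≤ k := hT ▸ card_pos.2 ⟨i, hiT⟩
  have hkn : k ≤ n - 1 := by
    have := card_lt_univ_of_notMem hjT
    rw [Fintype.card_fin] at this
    omega
  let first : Fin n := ⟨0, by omega⟩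
  let last : Fin n := ⟨n - 1, by omega⟩
  have hT' : #{l : Fin n | l.val < k} = k := by
    rw [Fin.card_filter_val_lt]
    omega
  obtain ⟨σ, hσT, hσi, hσj⟩ := Equiv.Perm.exists_image_eq_of_mem_of_notMem (hT.trans hT'.symm)
    hiT hjT (c := first) (d := last) (by simp [first]; omega) (by simp [last]; omega)
  rw [← hneutral σ p k hp hsp T, ← hneutral σ q k hq hsq T, hσT]
  refine hcond k hk1 hkn _ _ (fun l => hp _) (fun l => hq _) (by rwa [Equiv.sum_comp])
    (by rwa [Equiv.sum_comp]) ?_ ?_ fun l hl0 hln => hq_other _ ?_ ?_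
  · change p (σ.symm first) ≤ q (σ.symm first)
    rwa [← hσi, σ.symm_apply_apply]
  · change q (σ.symm last) ≤ p (σ.symm last)
    rwa [← hσj, σ.symm_apply_apply]
  · rw [Ne, σ.symm_apply_eq, hσi]
    rintro rfl
    exact lt_irrefl _ hl0
  · rw [Ne, σ.symm_apply_eq, hσj]
    rintro rfl
    exact lt_irrefl _ hln

/-- For a neutral rounding rule, monotonicity under transfers between the first
and last party (with respect to selecting `{1,…,k}`) implies full selection
monotonicity. -/
theorem neutral_two_point_implies_selection_monotone {n : ℕ}
    (r : (Fin n → ℝ) → Finset (Fin n) → ℝ)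
    (hneutral : NeutralRule n r)
    (hcond : ∀ (k : ℕ) (hk1 : 1 ≤ k) (hkn : k ≤ n - 1) (p p' : Fin n → ℝ),
      (∀ i, 0 ≤ p i ∧ p i < 1) → (∀ i, 0 ≤ p' i ∧ p' i < 1) →
      (∑ i, p i = (k : ℝ)) → (∑ i, p' i = (k : ℝ)) →
      p ⟨0, by omega⟩ ≤ p' ⟨0, by omega⟩ →
      p' ⟨n - 1, by omega⟩ ≤ p ⟨n - 1, by omega⟩ →
      (∀ i : Fin n, 0 < i.val → i.val < n - 1 → p' i = p i) →
      r p (univ.filter fun i : Fin n => i.val < k) ≤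
        r p' (univ.filter fun i : Fin n => i.val < k)) :
    SelectionMonotone n r := by
  intro k p p' hp hp' hs hs' T hT hTle hTcle
  let D : Set (Fin n → ℝ) := {q | (∀ i, 0 ≤ q i ∧ q i < 1) ∧ ∑ i, q i = k}
  have hD : ∀ q ∈ D, ∀ q' ∈ D, ∀ x ∈ Set.uIcc q q', ∑ i, x i = ∑ i, q i → x ∈ D := by
    rintro q ⟨hq, hqs⟩ q' ⟨hq', -⟩ x ⟨hlo, hhi⟩ hxs
    refine ⟨fun i => ⟨(le_inf (hq i).1 (hq' i).1).trans (hlo i), ?_⟩, hxs.trans hqs⟩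
    exact (hhi i).trans_lt (sup_lt_iff.2 ⟨(hq i).2, (hq' i).2⟩)
  exact le_of_forall_isTransferInto hD
    (fun q hq q' hq' => hneutral.le_of_isTransferInto hcond hT hq.1 hq'.1 hq.2 hq'.2)
    ⟨hp, hs⟩ ⟨hp', hs'⟩ (hs'.trans hs.symm) hTle hTcle
end

section
/- Let p := (1/10, 7/10, 1/10, 6/10, 7/10, 8/10) and p' := (1/10, 9/10, 1/10, 9/10, 1/10, 9/10), both vectors in [0,1)^6 summing to k = 3, and let T := {1, 3, 5}. Then: (a) for every permutation σ of {1,…,6}, the Lebesgue measure of the set of shifts u ∈ [0,1) for which all three of parties 1, 3, and 5 are selected by systematic rounding with residues p and order σ equals 0; and (b) for the identity order, the Lebesgue measure of the set of shifts u ∈ [0,1) for which all three of parties 1, 3, and 5 are selected by systematic rounding with residues p' equals 1/10. Since p_i ≥ p'_i for all i ∈ T and p_i ≤ p'_i for all i ∉ T, this shows that systematic rounding—with any fixed order of the parties, and also with a uniformly random order—violates selection monotonicity. -/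
/-!
Party `i` is selected iff `[u + s, u + s + p i)` contains an integer, where `s` is the start
of its interval. Under `p` the parties `0` and `2` both have residue `1/10`, so both are
selected only if their starts agree modulo `1`; but the starts lie in `(1/10)ℕ` and differ by
`(1 + s)/10` with `s` a subset sum of `{6, 7, 7, 8}`, never `9` modulo `10`. Under `p'` and the
identity order, parties `0`, `2`, `4` start at `0`, `1`, `2`, so all three are selected iff
`[u, u + 1/10)` contains an integer, i.e. iff `u = 0` or `9/10 < u`.
-/

open Finset

/-- Systematic rounding with order `σ`, residues `p`, and shift `u` selects
party `i` iff the half-open interval of length `p i` at position `σ.symm i`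
(after all intervals are shifted by `u`) contains an integer. -/
def sysSelected {n : ℕ} (σ : Equiv.Perm (Fin n)) (p : Fin n → ℝ) (u : ℝ)
    (i : Fin n) : Prop :=
  ∃ z : ℤ,
    u + ∑ m ∈ univ.filter (fun m : Fin n => m < σ.symm i), p (σ m) ≤ (z : ℝ) ∧
    (z : ℝ) < u + ∑ m ∈ univ.filter (fun m : Fin n => m ≤ σ.symm i), p (σ m)

section

variable {n : ℕ}

/-- The paper's `C_σ(m - 1)` for `i = σ m`: where the interval of party `i` starts. -/
def sysStart {M : Type*} [AddCommMonoid M] (σ : Equiv.Perm (Fin n)) (p : Fin n → M)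
    (i : Fin n) : M :=
  ∑ m ∈ univ.filter (fun m : Fin n => m < σ.symm i), p (σ m)

theorem sysStart_one {M : Type*} [AddCommMonoid M] (p : Fin n → M) (i : Fin n) :
    sysStart 1 p i = ∑ m ∈ univ.filter (fun m : Fin n => m < i), p m :=
  rfl

theorem sysSelected_iff (σ : Equiv.Perm (Fin n)) (p : Fin n → ℝ) (u : ℝ) (i : Fin n) :
    sysSelected σ p u i ↔
      ∃ z : ℤ, u + sysStart σ p i ≤ z ∧ (z : ℝ) < u + sysStart σ p i + p i := by
  have hle : univ.filter (fun m : Fin n => m ≤ σ.symm i)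
      = insert (σ.symm i) (univ.filter (fun m : Fin n => m < σ.symm i)) := by
    ext m; simp [le_iff_lt_or_eq, or_comm]
  rw [sysSelected, hle, sum_insert (by simp), Equiv.apply_symm_apply]
  simp only [sysStart, add_comm (p i), add_assoc]

theorem sysStart_natCast_div (σ : Equiv.Perm (Fin n)) (w : Fin n → ℕ) (d : ℝ) (i : Fin n) :
    sysStart σ (fun j => (w j : ℝ) / d) i = ((sysStart σ w i : ℕ) : ℝ) / d := by
  simp [sysStart, sum_div]

end

theorem modEq_of_exists_int_mem_Ico {d : ℕ} (hd : 0 < d) (u : ℝ) {a b : ℕ}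
    (ha : ∃ z : ℤ, u + a / d ≤ z ∧ (z : ℝ) < u + a / d + 1 / d)
    (hb : ∃ z : ℤ, u + b / d ≤ z ∧ (z : ℝ) < u + b / d + 1 / d) :
    a ≡ b [MOD d] := by
  obtain ⟨za, ha₁, ha₂⟩ := ha
  obtain ⟨zb, hb₁, hb₂⟩ := hb
  have hd' : (0 : ℝ) < d := by exact_mod_cast hd
  set t : ℤ := d * (za - zb) - (a - b)
  have ht : (t : ℝ) = d * ((za - (u + a / d)) - (zb - (u + b / d))) := by
    push_cast [t]; field_simp; ring
  have ht_abs : |(t : ℝ)| < 1 := by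
    rw [ht, abs_mul, Nat.abs_cast, ← lt_div_iff₀' hd']
    exact abs_sub_lt_of_nonneg_of_lt (by linarith) (by linarith) (by linarith) (by linarith)
  have ht0 : t = 0 := Int.abs_lt_one_iff.1 (by exact_mod_cast ht_abs)
  exact Nat.modEq_iff_dvd.2 ⟨zb - za, by linarith⟩

theorem exists_int_Ico_add_intCast_iff (u δ : ℝ) (k : ℤ) :
    (∃ z : ℤ, u + k ≤ z ∧ (z : ℝ) < u + k + δ) ↔
      ∃ z : ℤ, u ≤ z ∧ (z : ℝ) < u + δ := by
  constructor
  · rintro ⟨z, h₁, h₂⟩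
    exact ⟨z - k, by push_cast; linarith, by push_cast; linarith⟩
  · rintro ⟨z, h₁, h₂⟩
    exact ⟨z + k, by push_cast; linarith, by push_cast; linarith⟩

theorem setOf_mem_Ico_exists_int_eq {δ : ℝ} (hδ₀ : 0 < δ) (hδ₁ : δ ≤ 1) :
    {u : ℝ | u ∈ Set.Ico 0 1 ∧ ∃ z : ℤ, u ≤ z ∧ (z : ℝ) < u + δ}
      = insert 0 (Set.Ioo (1 - δ) 1) := by
  ext u
  simp only [Set.mem_ofPred_eq, Set.mem_Ico, Set.mem_insert_iff, Set.mem_Ioo]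
  constructor
  · rintro ⟨⟨hu₀, hu₁⟩, z, hz₁, hz₂⟩
    have hz₀ : 0 ≤ z := by exact_mod_cast hu₀.trans hz₁
    have hz₂' : z < 2 := by exact_mod_cast (show (z : ℝ) < 2 by linarith)
    interval_cases z
    · left; push_cast at hz₁; linarith
    · right; push_cast at hz₂; constructor <;> linarith
  · rintro (rfl | ⟨hu₀, hu₁⟩)
    · exact ⟨⟨le_rfl, one_pos⟩, 0, by simp, by simpa using hδ₀⟩
    · exact ⟨⟨by linarith, hu₁⟩, 1, by push_cast; linarith, by push_cast; linarith⟩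

theorem volume_setOf_mem_Ico_exists_int {δ : ℝ} (hδ₀ : 0 < δ) (hδ₁ : δ ≤ 1) :
    MeasureTheory.volume
        {u : ℝ | u ∈ Set.Ico 0 1 ∧ ∃ z : ℤ, u ≤ z ∧ (z : ℝ) < u + δ} = ENNReal.ofReal δ := by
  rw [setOf_mem_Ico_exists_int_eq hδ₀ hδ₁,
    MeasureTheory.measure_congr (MeasureTheory.insert_ae_eq_self _ _), Real.volume_Ioo,
    sub_sub_cancel]

set_option maxRecDepth 100000 in
theorem sysStart_zero_not_modEq_two : ∀ σ : Equiv.Perm (Fin 6),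
    ¬ sysStart σ (![1, 7, 1, 6, 7, 8] : Fin 6 → ℕ) 0
      ≡ sysStart σ (![1, 7, 1, 6, 7, 8] : Fin 6 → ℕ) 2 [MOD 10] := by
  decide

theorem not_sysSelected_zero_and_two (σ : Equiv.Perm (Fin 6)) (u : ℝ) :
    ¬ (sysSelected σ ![1/10, 7/10, 1/10, 6/10, 7/10, 8/10] u 0 ∧
      sysSelected σ ![1/10, 7/10, 1/10, 6/10, 7/10, 8/10] u 2) := by
  have hp : (![1/10, 7/10, 1/10, 6/10, 7/10, 8/10] : Fin 6 → ℝ)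
      = fun j => ((![1, 7, 1, 6, 7, 8] : Fin 6 → ℕ) j : ℝ) / (10 : ℕ) := by
    ext j; fin_cases j <;> norm_num
  rintro ⟨h₀, h₂⟩
  rw [hp, sysSelected_iff, sysStart_natCast_div] at h₀ h₂
  simp only [Matrix.cons_val, Nat.cast_one] at h₀ h₂
  exact sysStart_zero_not_modEq_two σ (modEq_of_exists_int_mem_Ico (by norm_num) u h₀ h₂)

theorem forall_sysSelected_one_iff (u : ℝ) :
    (∀ i ∈ ({0, 2, 4} : Finset (Fin 6)),
      sysSelected 1 ![1/10, 9/10, 1/10, 9/10, 1/10, 9/10] u i) ↔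
      ∃ z : ℤ, u ≤ z ∧ (z : ℝ) < u + 1/10 := by
  suffices h : ∀ i ∈ ({0, 2, 4} : Finset (Fin 6)),
      sysSelected 1 ![1/10, 9/10, 1/10, 9/10, 1/10, 9/10] u i ↔
        ∃ z : ℤ, u ≤ z ∧ (z : ℝ) < u + 1/10 from
    ⟨fun hsel => (h 0 (by simp)).1 (hsel 0 (by simp)), fun hz i hi => (h i hi).2 hz⟩
  intro i hi
  obtain ⟨k, hk⟩ :
      ∃ k : ℤ, sysStart 1 ![(1 : ℝ)/10, 9/10, 1/10, 9/10, 1/10, 9/10] i = k := by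
    rw [sysStart_one]
    fin_cases hi
    · exact ⟨0, by simp⟩
    · exact ⟨1, by simp [sum_filter, Fin.sum_univ_six]; norm_num⟩
    · exact ⟨2, by simp [sum_filter, Fin.sum_univ_six]; norm_num⟩
  have hpi : (![1/10, 9/10, 1/10, 9/10, 1/10, 9/10] : Fin 6 → ℝ) i = 1/10 := by
    fin_cases hi <;> rfl
  rw [sysSelected_iff, hk, hpi, exists_int_Ico_add_intCast_iff]

/-- With residues `p = (0.1, 0.7, 0.1, 0.6, 0.7, 0.8)` (summing to `k = 3`) the
coalition `T = {1, 3, 5}` is selected with probability `0` under systematic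
rounding for every order of the parties, whereas with residues
`p' = (0.1, 0.9, 0.1, 0.9, 0.1, 0.9)` (also summing to `3`) it is selected with
probability `1/10` under the identity order. Since `p i ≥ p' i` for `i ∈ T` and
`p i ≤ p' i` for `i ∉ T`, systematic rounding (with any fixed order, and with a
uniformly random order) violates selection monotonicity. -/
theorem systematic_rounding_counterexample :
    (∀ σ : Equiv.Perm (Fin 6),
      MeasureTheory.volume
          {u : ℝ | u ∈ Set.Ico (0 : ℝ) 1 ∧
            ∀ i ∈ ({0, 2, 4} : Finset (Fin 6)),
              sysSelected σ ![1/10, 7/10, 1/10, 6/10, 7/10, 8/10] u i} = 0) ∧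
    MeasureTheory.volume
        {u : ℝ | u ∈ Set.Ico (0 : ℝ) 1 ∧
          ∀ i ∈ ({0, 2, 4} : Finset (Fin 6)),
            sysSelected 1 ![1/10, 9/10, 1/10, 9/10, 1/10, 9/10] u i} = 1/10 := by
  refine ⟨fun σ => ?_, ?_⟩
  · refine MeasureTheory.measure_mono_null (fun u hu => ?_) MeasureTheory.measure_empty
    exact not_sysSelected_zero_and_two σ u ⟨hu.2 0 (by simp), hu.2 2 (by simp)⟩
  · simp_rw [forall_sysSelected_one_iff]
    rw [volume_setOf_mem_Ico_exists_int (by norm_num) (by norm_num),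
      ENNReal.ofReal_div_of_pos (by norm_num)]
    simp
end

section
/- Let a be an apportionment method for n parties satisfying quota, ex-ante proportionality, and threshold monotonicity. Define a rounding rule r as follows: for p ∈ [0,1)^n summing to an integer k ≥ 1, let r(p) be the distribution of the random set {i : α_i = 1} where α ∼ a(p, k) (taking the vote vector v := p and house size h := k, so that the standard quotas equal p and, by quota, α ∈ {0,1}^n with ∑_i α_i = k). Then r is a well-defined rounding rule and satisfies selection monotonicity. -/
open Finset

/-- Threshold monotonicity of an apportionment method. -/
def ThresholdMonotone (n : ℕ) (a : (Fin n → ℝ) → ℕ → (Fin n → ℕ) → ℝ) : Prop :=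
  ∀ (v v' : Fin n → ℝ) (h : ℕ),
    (∀ i, 0 ≤ v i) → 0 < ∑ j, v j → (∀ i, 0 ≤ v' i) → 0 < ∑ j, v' j →
    ∀ T : Finset (Fin n),
      (∀ i ∈ T, stdQuota v h i ≤ stdQuota v' h i) →
      (∀ i ∉ T, stdQuota v' h i ≤ stdQuota v h i) →
      ∀ θ : ℕ,
        (∑' α : Fin n → ℕ, if θ ≤ ∑ i ∈ T, α i then a v h α else 0) ≤
          ∑' α : Fin n → ℕ, if θ ≤ ∑ i ∈ T, α i then a v' h α else 0

/-- The rounding rule induced by an apportionment method: run the method on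
vote vector `p` and house size `k`, and return the set of parties receiving a
seat. `inducedRule a p k A` is the probability that this set equals `A`. -/
noncomputable def inducedRule {n : ℕ} (a : (Fin n → ℝ) → ℕ → (Fin n → ℕ) → ℝ)
    (p : Fin n → ℝ) (k : ℕ) (A : Finset (Fin n)) : ℝ :=
  ∑' α : Fin n → ℕ, if univ.filter (fun i => α i = 1) = A then a p k α else 0

/-! Under quota, an input `p ∈ [0,1)^n` with `∑ p = k` forces every apportionment `α ∼ a(p, k)`
to be a `0/1`-vector with `k` ones, so `{i : α_i = 1}` is a `k`-set whose inclusion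
probabilities are the expected seat counts, i.e. `p` by ex-ante proportionality. For a `k`-set
`T`, the selected set equals `T` exactly when `T` receives at least `k` seats, so selection
monotonicity is threshold monotonicity of the coalition `T` at threshold `θ = k`. -/

lemma stdQuota_eq_of_sum_eq {n : ℕ} {v : Fin n → ℝ} {h : ℕ} (hh : 0 < h)
    (hv : ∑ j, v j = h) (i : Fin n) : stdQuota v h i = v i := by
  rw [stdQuota, hv, mul_div_cancel_left₀ _ (Nat.cast_ne_zero.mpr hh.ne')]

lemma sum_pos_of_sum_eq {n : ℕ} {v : Fin n → ℝ} {h : ℕ} (hh : 0 < h) (hv : ∑ j, v j = h) :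
    0 < ∑ j, v j := by
  rw [hv]
  exact_mod_cast hh

lemma Summable.ite_of_nonneg {β : Type*} {f : β → ℝ} (hf : Summable f) (hf0 : ∀ x, 0 ≤ f x)
    (c : β → Prop) [DecidablePred c] : Summable (fun x => if c x then f x else 0) :=
  hf.of_nonneg_of_le (fun x => by split_ifs <;> simp [hf0 x])
    (fun x => by split_ifs <;> simp [hf0 x])

lemma Finset.sum_tsum_ite_eq {β γ : Type*} [DecidableEq γ] {f : β → ℝ} (hf : Summable f)
    (hf0 : ∀ x, 0 ≤ f x) (g : β → γ) (s : Finset γ) :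
    ∑ c ∈ s, ∑' x, (if g x = c then f x else 0) = ∑' x, if g x ∈ s then f x else 0 := by
  rw [← Summable.tsum_finsetSum fun c _ => hf.ite_of_nonneg hf0 _]
  exact tsum_congr fun x => Finset.sum_ite_eq s (g x) fun _ => f x

lemma sum_eq_card_filter_eq_one {ι : Type*} {α : ι → ℕ} (hα : ∀ i, α i ≤ 1) (s : Finset ι) :
    ∑ i ∈ s, α i = #(s.filter (α · = 1)) := by
  rw [card_filter]
  refine sum_congr rfl fun i _ => ?_
  rcases Nat.le_one_iff_eq_zero_or_eq_one.mp (hα i) with h | h <;> simp [h]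

lemma filter_eq_one_eq_iff_card_le_sum {ι : Type*} [Fintype ι] [DecidableEq ι] {α : ι → ℕ}
    (hα : ∀ i, α i ≤ 1) {T : Finset ι}
    (hsum : ∑ i, α i = #T) : univ.filter (α · = 1) = T ↔ #T ≤ ∑ i ∈ T, α i := by
  rw [sum_eq_card_filter_eq_one hα] at hsum ⊢
  constructor
  · intro h
    rw [← h, filter_filter]
    simp
  · intro hle
    have hsub : univ.filter (α · = 1) ⊆ T := by
      have hinter : T.filter (α · = 1) = univ.filter (α · = 1) :=
        eq_of_subset_of_card_le (monotone_filter_left _ (subset_univ T)) (hsum.le.trans hle)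
      rw [← hinter]
      exact filter_subset _ _
    exact eq_of_subset_of_card_le hsub hsum.ge

section InducedRule

variable {n : ℕ} {a : (Fin n → ℝ) → ℕ → (Fin n → ℕ) → ℝ} {p : Fin n → ℝ} {k : ℕ}

lemma IsApportionment.summable (h1 : IsApportionment n a) {v : Fin n → ℝ} (h : ℕ)
    (hv : ∀ i, 0 ≤ v i) (hpos : 0 < ∑ j, v j) : Summable (a v h) := by
  by_contra hns
  have := (h1 v h hv hpos).2.1
  rw [tsum_eq_zero_of_not_summable hns] at this
  exact zero_ne_one this

lemma SatisfiesQuota.le_one (h2 : SatisfiesQuota n a) (hk : 1 ≤ k)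
    (hp : ∀ i, 0 ≤ p i ∧ p i < 1) (hs : ∑ i, p i = k) {α : Fin n → ℕ} (hα : a p k α ≠ 0)
    (i : Fin n) : α i ≤ 1 := by
  have hq := stdQuota_eq_of_sum_eq hk hs i
  rcases h2 p k (fun j => (hp j).1) (sum_pos_of_sum_eq hk hs) α hα i with h | h <;> rw [h, hq]
  · rw [Nat.floor_eq_zero.mpr (hp i).2]
    exact zero_le_one
  · exact Nat.ceil_le.mpr (by exact_mod_cast (hp i).2.le)

variable (h1 : IsApportionment n a) (h2 : SatisfiesQuota n a) (hk : 1 ≤ k)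
  (hp : ∀ i, 0 ≤ p i ∧ p i < 1) (hs : ∑ i, p i = k)
include h1 hk hp hs

lemma sum_inducedRule_eq_tsum (s : Finset (Finset (Fin n))) :
    ∑ A ∈ s, inducedRule a p k A =
      ∑' α, if univ.filter (fun i => α i = 1) ∈ s then a p k α else 0 := by
  have hpos := sum_pos_of_sum_eq hk hs
  exact sum_tsum_ite_eq (h1.summable k (fun i => (hp i).1) hpos)
    (h1 p k (fun i => (hp i).1) hpos).1 _ s

include h2

lemma inducedRule_isRoundingRule (h3 : ExAnteProportional n a) :
    (∀ A : Finset (Fin n), 0 ≤ inducedRule a p k A) ∧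
    (∑ A : Finset (Fin n), inducedRule a p k A = 1) ∧
    (∀ A : Finset (Fin n), inducedRule a p k A ≠ 0 → A.card = k) ∧
    (∀ i : Fin n,
      ∑ A ∈ (univ : Finset (Finset (Fin n))).filter (fun A => i ∈ A),
        inducedRule a p k A = p i) := by
  have hp0 : ∀ i, 0 ≤ p i := fun i => (hp i).1
  have hpos := sum_pos_of_sum_eq hk hs
  obtain ⟨ha0, ha1, hasum⟩ := h1 p k hp0 hpos
  refine ⟨fun A => tsum_nonneg fun α => ?_, ?_, fun A hA => ?_, fun i => ?_⟩
  · split_ifs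
    exacts [ha0 α, le_rfl]
  · simpa [sum_inducedRule_eq_tsum h1 hk hp hs] using ha1
  · obtain ⟨α, hα⟩ : ∃ α : Fin n → ℕ,
        (if univ.filter (fun i => α i = 1) = A then a p k α else 0) ≠ 0 := by
      by_contra! hzero
      exact hA (by simp [inducedRule, hzero])
    split_ifs at hα with hA
    · rw [← hA, ← sum_eq_card_filter_eq_one (h2.le_one hk hp hs hα), hasum α hα]
    · exact absurd rfl hα
  · rw [sum_inducedRule_eq_tsum h1 hk hp hs, ← stdQuota_eq_of_sum_eq hk hs,
      ← h3 p k hp0 hpos i]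
    refine tsum_congr fun α => ?_
    by_cases hα : a p k α = 0
    · simp [hα]
    · rcases Nat.le_one_iff_eq_zero_or_eq_one.mp (h2.le_one hk hp hs hα i) with h | h <;>
        simp [h]

lemma inducedRule_eq_tsum_ite_card_le_sum {T : Finset (Fin n)} (hT : #T = k) :
    inducedRule a p k T = ∑' α, if k ≤ ∑ i ∈ T, α i then a p k α else 0 := by
  refine tsum_congr fun α => ?_
  by_cases hα : a p k α = 0
  · simp [hα]
  · have hsum : ∑ i, α i = #T :=
      hT ▸ (h1 p k (fun i => (hp i).1) (sum_pos_of_sum_eq hk hs)).2.2 α hα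
    rw [if_congr (filter_eq_one_eq_iff_card_le_sum (h2.le_one hk hp hs hα) hsum) rfl rfl, hT]

lemma inducedRule_mono (h4 : ThresholdMonotone n a) {p' : Fin n → ℝ}
    (hp' : ∀ i, 0 ≤ p' i ∧ p' i < 1) (hs' : ∑ i, p' i = k) {T : Finset (Fin n)} (hT : #T = k)
    (hpT : ∀ i ∈ T, p i ≤ p' i) (hpT' : ∀ i ∉ T, p' i ≤ p i) :
    inducedRule a p k T ≤ inducedRule a p' k T := by
  have hq := stdQuota_eq_of_sum_eq hk hs
  have hq' := stdQuota_eq_of_sum_eq hk hs'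
  rw [inducedRule_eq_tsum_ite_card_le_sum h1 h2 hk hp hs hT,
    inducedRule_eq_tsum_ite_card_le_sum h1 h2 hk hp' hs' hT]
  refine h4 p p' k (fun i => (hp i).1) (sum_pos_of_sum_eq hk hs) (fun i => (hp' i).1)
    (sum_pos_of_sum_eq hk hs') T (fun i hi => ?_) (fun i hi => ?_) k
  · rw [hq, hq']; exact hpT i hi
  · rw [hq, hq']; exact hpT' i hi

end InducedRule

/-- The rounding rule induced by a threshold monotone apportionment method
(satisfying quota and ex-ante proportionality) is a well-defined rounding rule
and satisfies selection monotonicity. -/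
theorem induced_rounding_rule_selection_monotone {n : ℕ}
    (a : (Fin n → ℝ) → ℕ → (Fin n → ℕ) → ℝ)
    (h1 : IsApportionment n a) (h2 : SatisfiesQuota n a)
    (h3 : ExAnteProportional n a) (h4 : ThresholdMonotone n a) :
    (∀ (p : Fin n → ℝ) (k : ℕ), 1 ≤ k →
      (∀ i, 0 ≤ p i ∧ p i < 1) → (∑ i, p i = (k : ℝ)) →
      (∀ A : Finset (Fin n), 0 ≤ inducedRule a p k A) ∧
      (∑ A : Finset (Fin n), inducedRule a p k A = 1) ∧
      (∀ A : Finset (Fin n), inducedRule a p k A ≠ 0 → A.card = k) ∧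
      (∀ i : Fin n,
        ∑ A ∈ (univ : Finset (Finset (Fin n))).filter (fun A => i ∈ A),
          inducedRule a p k A = p i)) ∧
    (∀ (k : ℕ), 1 ≤ k → ∀ (p p' : Fin n → ℝ),
      (∀ i, 0 ≤ p i ∧ p i < 1) → (∀ i, 0 ≤ p' i ∧ p' i < 1) →
      (∑ i, p i = (k : ℝ)) → (∑ i, p' i = (k : ℝ)) →
      ∀ T : Finset (Fin n), T.card = k →
        (∀ i ∈ T, p i ≤ p' i) → (∀ i ∉ T, p' i ≤ p i) →
        inducedRule a p k T ≤ inducedRule a p' k T) := by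
  
  exact ⟨fun p k hk hp hs => inducedRule_isRoundingRule h1 h2 hk hp hs h3,
    fun k hk p p' hp hp' hs hs' T hT hpT hpT' =>
      inducedRule_mono h1 h2 hk hp hs h4 hp' hs' hT hpT hpT'⟩
end
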